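/- arXiv:0901.4184 — 5 statements merged into one kernel-verified Lean document; each statement's English description precedes it below -/
import Mathlib

section
/- With probability at least 1 − δ over the draw of the i.i.d. training sample Z^n, every classifier h in the countable class ℋ satisfies |R_D(h) − R̂_D(h)| ≤ φ_D(h, δ). This holds for every n ≥ 1, every 0 < δ < 1, and every underlying probability distribution P on 𝒳 × {0,1}. -/
open MeasureTheory ENNReal

/-- Symmetric deviation between two extended nonnegative reals. -/
noncomputable def edistE (a b : ℝ≥0∞) : ℝ≥0∞ := (a - b) ⊔ (b - a)

/-- The false discovery rate `R_D(h) = P(Y = 0 | h(X) = 1)`, equal to `∞` when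
`P(h(X) = 1) = 0`. -/
noncomputable def RD {𝓧 : Type*} [MeasurableSpace 𝓧] (P : Measure (𝓧 × Bool))
    (h : 𝓧 → Bool) : ℝ≥0∞ :=
  if 0 < P {z : 𝓧 × Bool | h z.1 = true} then
    P {z : 𝓧 × Bool | z.2 = false ∧ h z.1 = true} / P {z : 𝓧 × Bool | h z.1 = true}
  else ⊤

/-- The empirical number of discoveries `n_D(h, Zⁿ)`. -/
def nD {𝓧 : Type*} {n : ℕ} (h : 𝓧 → Bool) (ω : Fin n → 𝓧 × Bool) : ℕ :=
  (Finset.univ.filter fun i => h (ω i).1 = true).card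

/-- The empirical false discovery rate `R̂_D(h)`, equal to `∞` when `n_D(h, Zⁿ) = 0`. -/
noncomputable def RhatD {𝓧 : Type*} {n : ℕ} (h : 𝓧 → Bool) (ω : Fin n → 𝓧 × Bool) : ℝ≥0∞ :=
  if 0 < nD h ω then
    ((Finset.univ.filter fun i => (ω i).2 = false ∧ h (ω i).1 = true).card : ℝ≥0∞)
      / (nD h ω : ℝ≥0∞)
  else ⊤

/-- The penalty `√((⟦h⟧ log 2 + log(2/δ)) / (2 m))` (with `m` the number of
(non)discoveries), equal to `∞` when `m = 0`. -/
noncomputable def pen (c δ : ℝ) (m : ℕ) : ℝ≥0∞ :=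
  if 0 < m then ENNReal.ofReal (Real.sqrt ((c * Real.log 2 + Real.log (2 / δ)) / (2 * m)))
  else ⊤

/-! Fix a classifier `h` and write `a`, `b`, `c` for the probabilities that a sample point is a
false discovery, a true discovery, or no discovery. The event that `S` is the set of discoveries
and `T ⊆ S` the set of false discoveries is a product set of probability
`a ^ #T * b ^ (#S - #T) * c ^ (n - #S)`, so given `#S = m` the number of false discoveries is
binomial with parameters `m` and `R_D(h) = a / (a + b)`. Hoeffding's lemma for a Bernoulli
variable and the Chernoff bound make the two-sided tail beyond `ε` at most `2 exp (-2 m ε²)`,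
which for `ε = φ_D(h, δ)` is `δ 2^(-⟦h⟧)` whatever `m` is. Summing over `S` by the binomial
theorem (`a + b + c = 1`) bounds the bad event of `h` by `δ 2^(-⟦h⟧)`, and the union bound over
`ℋ` together with Kraft's inequality bounds the bad event of the class by `δ`. -/

open ProbabilityTheory Real Finset

lemma bernoulli_centered_mgf_le {p : ℝ} (hp0 : 0 ≤ p) (hp1 : p ≤ 1) (t : ℝ) :
    p * exp (t * (1 - p)) + (1 - p) * exp (-(t * p)) ≤ exp (t ^ 2 / 8) := by
  set μ := bernoulliMeasure true false (⟨p, hp0, hp1⟩ : unitInterval)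
  let X : Bool → ℝ := fun b => if b then 1 else 0
  have hmean : μ[X] = p := by simp [μ, integral_bernoulliMeasure, X]
  have hmgf := (hasSubgaussianMGF_of_mem_Icc (μ := μ) (X := X) (a := 0) (b := 1)
    Measurable.of_discrete.aemeasurable (ae_of_all _ fun b => by cases b <;> simp [X])).mgf_le t
  norm_num [mgf, integral_bernoulliMeasure, μ, X, hmean] at hmgf
  convert hmgf using 2
  ring

lemma sum_choose_mul_exp_le {p : ℝ} (hp0 : 0 ≤ p) (hp1 : p ≤ 1) (m : ℕ) (t : ℝ) :
    ∑ k ∈ range (m + 1), (m.choose k : ℝ) * p ^ k * (1 - p) ^ (m - k) * exp (t * (k - m * p))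
      ≤ exp (m * (t ^ 2 / 8)) := by
  have hbinom : ∑ k ∈ range (m + 1),
      (m.choose k : ℝ) * p ^ k * (1 - p) ^ (m - k) * exp (t * (k - m * p))
      = (p * exp (t * (1 - p)) + (1 - p) * exp (-(t * p))) ^ m := by
    rw [add_pow]
    refine sum_congr rfl fun k hk => ?_
    have hkm : k ≤ m := Nat.lt_succ_iff.mp (mem_range.mp hk)
    rw [mul_pow, mul_pow, ← exp_nat_mul, ← exp_nat_mul, Nat.cast_sub hkm,
      show t * (k - m * p) = k * (t * (1 - p)) + (m - k) * -(t * p) by ring, exp_add]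
    ring
  rw [hbinom, exp_nat_mul]
  exact pow_le_pow_left₀ (by positivity) (bernoulli_centered_mgf_le hp0 hp1 t) m

lemma one_le_exp_add_exp_of_lt_abs {m ε x : ℝ} (hε : 0 ≤ ε) (hx : m * ε < |x|) :
    1 ≤ (exp (4 * ε * x) + exp (-(4 * ε) * x)) * exp (-(4 * m * ε ^ 2)) := by
  rw [add_mul, ← exp_add, ← exp_add]
  rcases lt_abs.mp hx with hx | hx
  · have : 0 ≤ 4 * ε * x + -(4 * m * ε ^ 2) := by nlinarith
    linarith [one_le_exp this, exp_pos (-(4 * ε) * x + -(4 * m * ε ^ 2))]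
  · have : 0 ≤ -(4 * ε) * x + -(4 * m * ε ^ 2) := by nlinarith
    linarith [one_le_exp this, exp_pos (4 * ε * x + -(4 * m * ε ^ 2))]

lemma sum_choose_filter_lt_abs_sub_le {p : ℝ} (hp0 : 0 ≤ p) (hp1 : p ≤ 1) {m : ℕ} (hm : 0 < m)
    {ε : ℝ} (hε : 0 ≤ ε) :
    ∑ k ∈ range (m + 1) with ε < |p - ((k : ℕ) : ℝ) / m|,
        (m.choose k : ℝ) * p ^ k * (1 - p) ^ (m - k)
      ≤ 2 * exp (-(2 * m * ε ^ 2)) := by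
  have hm' : (0 : ℝ) < m := Nat.cast_pos.mpr hm
  set w : ℕ → ℝ := fun k => (m.choose k : ℝ) * p ^ k * (1 - p) ^ (m - k)
  have hw : ∀ k, 0 ≤ w k := fun k => by have := sub_nonneg.2 hp1; positivity
  -- Chernoff at `t = ± 4 ε`, the minimiser of `m t ^ 2 / 8 - m t ε`.
  set e : ℕ → ℝ := fun k =>
    (exp (4 * ε * (k - m * p)) + exp (-(4 * ε) * (k - m * p))) * exp (-(4 * m * ε ^ 2))
  calc ∑ k ∈ range (m + 1) with ε < |p - ((k : ℕ) : ℝ) / m|, w k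
      ≤ ∑ k ∈ range (m + 1) with ε < |p - ((k : ℕ) : ℝ) / m|, w k * e k := by
        refine sum_le_sum fun k hk => le_mul_of_one_le_right (hw k) ?_
        refine one_le_exp_add_exp_of_lt_abs hε ?_
        have hk := (mem_filter.mp hk).2
        rw [show (k : ℝ) - m * p = m * (k / m - p) by field_simp, abs_mul, abs_of_pos hm',
          abs_sub_comm]
        exact mul_lt_mul_of_pos_left hk hm'
    _ ≤ ∑ k ∈ range (m + 1), w k * e k :=
        sum_le_sum_of_subset_of_nonneg (filter_subset _ _) fun k _ _ => by positivity
    _ = (∑ k ∈ range (m + 1), w k * exp (4 * ε * (k - m * p))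
          + ∑ k ∈ range (m + 1), w k * exp (-(4 * ε) * (k - m * p)))
          * exp (-(4 * m * ε ^ 2)) := by
        simp only [e, mul_add, add_mul, sum_add_distrib, sum_mul, mul_assoc]
    _ ≤ (exp (m * ((4 * ε) ^ 2 / 8)) + exp (m * ((-(4 * ε)) ^ 2 / 8)))
          * exp (-(4 * m * ε ^ 2)) := by
        gcongr <;> exact sum_choose_mul_exp_le hp0 hp1 m _
    _ = 2 * exp (-(2 * m * ε ^ 2)) := by
        rw [neg_sq, ← two_mul, mul_assoc, ← exp_add]
        ring_nf

lemma edistE_ofReal {x y : ℝ} (hx : 0 ≤ x) (hy : 0 ≤ y) :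
    edistE (ENNReal.ofReal x) (ENNReal.ofReal y) = ENNReal.ofReal |x - y| := by
  rw [edistE, ← ENNReal.ofReal_sub x hy, ← ENNReal.ofReal_sub y hx,
    ← ENNReal.ofReal_max, abs_eq_max_neg, neg_sub]

lemma mul_ofReal_toReal_div {a s : ℝ≥0∞} (ha : a ≠ ⊤) (hs0 : s ≠ 0) (hs : s ≠ ⊤) :
    s * ENNReal.ofReal (a / s).toReal = a := by
  rw [ENNReal.ofReal_toReal (ENNReal.div_ne_top ha hs0), ENNReal.mul_div_cancel hs0 hs]

lemma sum_choose_filter_lt_edistE_le {a b : ℝ≥0∞} (ha : a ≠ ⊤) (hb : b ≠ ⊤) (hab : a + b ≠ 0)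
    {m : ℕ} (hm : 0 < m) {ε : ℝ} (hε : 0 ≤ ε) :
    ∑ k ∈ range (m + 1) with ENNReal.ofReal ε < edistE (a / (a + b)) (((k : ℕ) : ℝ≥0∞) / m),
        (m.choose k : ℝ≥0∞) * a ^ k * b ^ (m - k)
      ≤ (a + b) ^ m * ENNReal.ofReal (2 * exp (-(2 * m * ε ^ 2))) := by
  have hs : a + b ≠ ⊤ := ENNReal.add_ne_top.2 ⟨ha, hb⟩
  set p := (a / (a + b)).toReal
  set q := (b / (a + b)).toReal
  have hpq : p + q = 1 := by
    rw [← ENNReal.toReal_add (ENNReal.div_ne_top ha hab) (ENNReal.div_ne_top hb hab),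
      ENNReal.div_add_div_same, ENNReal.div_self hab hs, ENNReal.toReal_one]
  have hp0 : 0 ≤ p := ENNReal.toReal_nonneg
  have hp1 : p ≤ 1 := by linarith [(ENNReal.toReal_nonneg : 0 ≤ q)]
  have hm' : (0 : ℝ) < m := Nat.cast_pos.mpr hm
  have hterm : ∀ k ∈ range (m + 1), (m.choose k : ℝ≥0∞) * a ^ k * b ^ (m - k)
      = (a + b) ^ m * ENNReal.ofReal ((m.choose k : ℝ) * p ^ k * (1 - p) ^ (m - k)) := by
    intro k hk
    have hkm : k ≤ m := Nat.lt_succ_iff.mp (mem_range.mp hk)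
    rw [ENNReal.ofReal_mul (by positivity), ENNReal.ofReal_mul (by positivity),
      ENNReal.ofReal_natCast, ENNReal.ofReal_pow hp0, ENNReal.ofReal_pow (sub_nonneg.2 hp1),
      show 1 - p = q by linarith, ← pow_mul_pow_sub (a + b) hkm]
    calc (m.choose k : ℝ≥0∞) * a ^ k * b ^ (m - k)
        = (m.choose k : ℝ≥0∞) * ((a + b) * ENNReal.ofReal p) ^ k
            * ((a + b) * ENNReal.ofReal q) ^ (m - k) := by
          rw [mul_ofReal_toReal_div ha hab hs, mul_ofReal_toReal_div hb hab hs]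
      _ = _ := by rw [mul_pow, mul_pow]; ring
  have hbad : ∀ k : ℕ, ENNReal.ofReal ε < edistE (a / (a + b)) (k / m) ↔ ε < |p - k / m| := by
    intro k
    rw [← ENNReal.ofReal_toReal (ENNReal.div_ne_top ha hab), ← ENNReal.ofReal_natCast,
      ← ENNReal.ofReal_natCast m, ← ENNReal.ofReal_div_of_pos hm',
      edistE_ofReal hp0 (by positivity), ENNReal.ofReal_lt_ofReal_iff_of_nonneg hε]
  rw [filter_congr fun k _ => hbad k, sum_congr rfl fun k hk => hterm k (mem_filter.mp hk).1,
    ← mul_sum]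
  gcongr
  rw [← ENNReal.ofReal_sum_of_nonneg fun k _ => by have := sub_nonneg.2 hp1; positivity]
  exact ENNReal.ofReal_le_ofReal (sum_choose_filter_lt_abs_sub_le hp0 hp1 hm hε)

lemma two_mul_exp_neg_two_mul_sqrt_sq {c δ : ℝ} {m : ℕ} (hm : 0 < m) (hδ : 0 < δ)
    (hE : 0 ≤ c * Real.log 2 + Real.log (2 / δ)) :
    2 * exp (-(2 * m * √((c * Real.log 2 + Real.log (2 / δ)) / (2 * m)) ^ 2))
      = δ * 2 ^ (-c) := by
  have hm' : (0 : ℝ) < m := Nat.cast_pos.mpr hm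
  rw [sq_sqrt (by positivity), mul_div_cancel₀ _ (by positivity), neg_add, exp_add,
    rpow_def_of_pos two_pos, exp_neg (log _), exp_log (by positivity)]
  field_simp

lemma prod_ite_mem_ite_mem {ι M : Type*} [DecidableEq ι] [CommMonoid M] {s S T : Finset ι}
    (hS : S ⊆ s) (hT : T ⊆ S) (x y z : M) :
    ∏ i ∈ s, (if i ∈ T then x else if i ∈ S then y else z)
      = x ^ #T * y ^ (#S - #T) * z ^ (#s - #S) := by
  rw [← prod_sdiff hS, ← prod_sdiff hT,
    prod_eq_pow_card (s := T) fun i hi => if_pos hi,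
    prod_eq_pow_card (s := S \ T) (b := y) fun i hi => by simp [mem_sdiff.1 hi],
    prod_eq_pow_card (s := s \ S) (b := z) fun i hi => by
      simp [(mem_sdiff.1 hi).2, show i ∉ T from fun hiT => (mem_sdiff.1 hi).2 (hT hiT)],
    card_sdiff_of_subset hS, card_sdiff_of_subset hT]
  ac_rfl

lemma sum_powerset_sum_powerset_filter_le {ι R : Type*} [CommSemiring R] [PartialOrder R]
    [CanonicallyOrderedAdd R] (s : Finset ι) (bad : ℕ → ℕ → Prop) [DecidableRel bad]
    (a b c D : R)
    (hbin : ∀ m, ∑ k ∈ range (m + 1) with bad m k, (m.choose k : R) * a ^ k * b ^ (m - k)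
      ≤ (a + b) ^ m * D) :
    ∑ S ∈ s.powerset, ∑ T ∈ S.powerset with bad #S #T, a ^ #T * b ^ (#S - #T) * c ^ (#s - #S)
      ≤ (a + b + c) ^ #s * D := by
  have hinner : ∀ S : Finset ι,
      ∑ T ∈ S.powerset with bad #S #T, a ^ #T * b ^ (#S - #T) * c ^ (#s - #S)
        = (∑ k ∈ range (#S + 1) with bad #S k, ((#S).choose k : R) * a ^ k * b ^ (#S - k))
          * c ^ (#s - #S) := by
    intro S
    rw [sum_filter, sum_filter, sum_mul, sum_powerset_apply_card
      (fun k => if bad #S k then a ^ k * b ^ (#S - k) * c ^ (#s - #S) else 0)]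
    refine sum_congr rfl fun k _ => ?_
    split_ifs <;> simp [nsmul_eq_mul, mul_assoc]
  calc _ = ∑ S ∈ s.powerset,
          (∑ k ∈ range (#S + 1) with bad #S k, ((#S).choose k : R) * a ^ k * b ^ (#S - k))
            * c ^ (#s - #S) := sum_congr rfl fun S _ => hinner S
    _ ≤ ∑ S ∈ s.powerset, (a + b) ^ #S * D * c ^ (#s - #S) := by gcongr with S; exact hbin _
    _ = (a + b + c) ^ #s * D := by
      rw [sum_powerset_apply_card (fun m => (a + b) ^ m * D * c ^ (#s - m)), add_pow, sum_mul]
      refine sum_congr rfl fun m _ => ?_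
      rw [nsmul_eq_mul]
      ring

-- `RhatD h ω` unfolds to `fdrOfCounts #(discoveries h ω) #(falseDiscoveries h ω)`.
noncomputable def fdrOfCounts (m k : ℕ) : ℝ≥0∞ := if 0 < m then k / m else ⊤

section

variable {𝓧 : Type*}

def discoveries {n : ℕ} (h : 𝓧 → Bool) (ω : Fin n → 𝓧 × Bool) : Finset (Fin n) :=
  {i | h (ω i).1 = true}

def falseDiscoveries {n : ℕ} (h : 𝓧 → Bool) (ω : Fin n → 𝓧 × Bool) : Finset (Fin n) :=
  {i | (ω i).2 = false ∧ h (ω i).1 = true}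

lemma falseDiscoveries_subset_discoveries {n : ℕ} (h : 𝓧 → Bool) (ω : Fin n → 𝓧 × Bool) :
    falseDiscoveries h ω ⊆ discoveries h ω :=
  fun i hi => by simp_all [discoveries, falseDiscoveries]

lemma setOf_discoveries_eq_and_falseDiscoveries_eq {n : ℕ} (h : 𝓧 → Bool)
    {S T : Finset (Fin n)} (hT : T ⊆ S) :
    {ω : Fin n → 𝓧 × Bool | discoveries h ω = S ∧ falseDiscoveries h ω = T}
      = Set.univ.pi fun i => if i ∈ T then {z | z.2 = false ∧ h z.1 = true}
          else if i ∈ S then {z | z.2 = true ∧ h z.1 = true} else {z | h z.1 = false} := by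
  ext ω
  simp only [discoveries, falseDiscoveries, Finset.ext_iff, mem_filter, mem_univ, true_and,
    Set.mem_ofPred_eq, Set.mem_univ_pi, ← forall_and]
  refine forall_congr' fun i => ?_
  have hiTS := @hT i
  obtain ⟨x, y⟩ := ω i
  by_cases hiT : i ∈ T <;> by_cases hiS : i ∈ S <;> cases y <;> cases hx : h x <;> simp_all

variable [MeasurableSpace 𝓧]

lemma measure_discovery_eq_add (P : Measure (𝓧 × Bool)) {h : 𝓧 → Bool} (hh : Measurable h) :
    P {z | h z.1 = true}
      = P {z | z.2 = false ∧ h z.1 = true} + P {z | z.2 = true ∧ h z.1 = true} := by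
  have hB : MeasurableSet {z : 𝓧 × Bool | z.2 = true ∧ h z.1 = true} :=
    (measurableSet_eq_fun measurable_snd measurable_const).inter
      (measurableSet_eq_fun (hh.comp measurable_fst) measurable_const)
  rw [← measure_union (Set.disjoint_left.2 fun z h1 h2 => by simp_all) hB]
  congr 1; ext ⟨x, y⟩; cases y <;> simp

lemma measure_discovery_add_measure_nondiscovery (P : Measure (𝓧 × Bool))
    [IsProbabilityMeasure P] {h : 𝓧 → Bool} (hh : Measurable h) :
    P {z | h z.1 = true} + P {z | h z.1 = false} = 1 := by
  have hcompl : {z : 𝓧 × Bool | h z.1 = false} = {z | h z.1 = true}ᶜ := by ext; simp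
  have hs : MeasurableSet {z : 𝓧 × Bool | h z.1 = true} :=
    measurableSet_eq_fun (hh.comp measurable_fst) measurable_const
  rw [hcompl, measure_add_measure_compl hs, measure_univ]

lemma measure_pi_discoveries_eq_and_falseDiscoveries_eq (P : Measure (𝓧 × Bool))
    [SigmaFinite P] {n : ℕ} (h : 𝓧 → Bool) {S T : Finset (Fin n)} (hT : T ⊆ S) :
    Measure.pi (fun _ => P) {ω | discoveries h ω = S ∧ falseDiscoveries h ω = T}
      = P {z | z.2 = false ∧ h z.1 = true} ^ #T * P {z | z.2 = true ∧ h z.1 = true} ^ (#S - #T)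
          * P {z | h z.1 = false} ^ (n - #S) := by
  rw [setOf_discoveries_eq_and_falseDiscoveries_eq h hT, Measure.pi_pi]
  calc _ = ∏ i, (if i ∈ T then P {z | z.2 = false ∧ h z.1 = true}
          else if i ∈ S then P {z | z.2 = true ∧ h z.1 = true} else P {z | h z.1 = false}) :=
        prod_congr rfl fun i _ => by split_ifs <;> rfl
    _ = _ := by rw [prod_ite_mem_ite_mem (subset_univ S) hT, card_univ, Fintype.card_fin]

lemma sum_choose_filter_not_edistE_le_pen_le (P : Measure (𝓧 × Bool)) [IsFiniteMeasure P]
    {h : 𝓧 → Bool} (hh : Measurable h) {c δ : ℝ} (hδ : 0 < δ)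
    (hE : 0 ≤ c * Real.log 2 + Real.log (2 / δ)) (m : ℕ) :
    ∑ k ∈ range (m + 1) with ¬ edistE (RD P h) (fdrOfCounts m k) ≤ pen c δ m,
        (m.choose k : ℝ≥0∞) * P {z | z.2 = false ∧ h z.1 = true} ^ k
          * P {z | z.2 = true ∧ h z.1 = true} ^ (m - k)
      ≤ (P {z | z.2 = false ∧ h z.1 = true} + P {z | z.2 = true ∧ h z.1 = true}) ^ m
          * (ENNReal.ofReal δ * 2 ^ (-c)) := by
  set a := P {z | z.2 = false ∧ h z.1 = true}
  set b := P {z | z.2 = true ∧ h z.1 = true}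
  rcases Nat.eq_zero_or_pos m with rfl | hm
  · simp [pen]
  rcases eq_or_ne (a + b) 0 with hab | hab
  · obtain ⟨ha, hb⟩ := add_eq_zero.mp hab
    refine (sum_eq_zero fun k hk => ?_).trans_le zero_le
    rcases Nat.eq_zero_or_pos k with rfl | hk
    · simp [hb, hm.ne']
    · simp [ha, hk.ne']
  have hRD : RD P h = a / (a + b) := by
    have hpos : 0 < P {z | h z.1 = true} := by
      rw [measure_discovery_eq_add P hh]; exact pos_iff_ne_zero.2 hab
    rw [RD, if_pos hpos, measure_discovery_eq_add P hh]
  simp only [hRD, fdrOfCounts, pen, if_pos hm, not_le]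
  refine (sum_choose_filter_lt_edistE_le (measure_ne_top _ _) (measure_ne_top _ _) hab hm
    (sqrt_nonneg _)).trans_eq ?_
  rw [two_mul_exp_neg_two_mul_sqrt_sq hm hδ hE, ENNReal.ofReal_mul hδ.le,
    ← ENNReal.ofReal_rpow_of_pos two_pos, ENNReal.ofReal_ofNat]

lemma measure_pi_not_edistE_le_pen_le (P : Measure (𝓧 × Bool)) [IsProbabilityMeasure P]
    {h : 𝓧 → Bool} (hh : Measurable h) {c δ : ℝ} (hδ : 0 < δ)
    (hE : 0 ≤ c * Real.log 2 + Real.log (2 / δ)) (n : ℕ) :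
    Measure.pi (fun _ : Fin n => P) {ω | ¬ edistE (RD P h) (RhatD h ω) ≤ pen c δ (nD h ω)}
      ≤ ENNReal.ofReal δ * 2 ^ (-c) := by
  set bad : ℕ → ℕ → Prop := fun m k => ¬ edistE (RD P h) (fdrOfCounts m k) ≤ pen c δ m
  have hcover : {ω | ¬ edistE (RD P h) (RhatD h ω) ≤ pen c δ (nD h ω)}
      ⊆ ⋃ S : Finset (Fin n), ⋃ T ∈ S.powerset.filter fun T => bad #S #T,
          {ω | discoveries h ω = S ∧ falseDiscoveries h ω = T} := fun ω hω => by
    simp only [Set.mem_iUnion]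
    exact ⟨_, _, mem_filter.2 ⟨mem_powerset.2 (falseDiscoveries_subset_discoveries h ω), hω⟩,
      rfl, rfl⟩
  calc _ ≤ _ := measure_mono hcover
    _ ≤ ∑ S : Finset (Fin n), ∑ T ∈ S.powerset with bad #S #T,
          Measure.pi (fun _ => P) {ω | discoveries h ω = S ∧ falseDiscoveries h ω = T} :=
        (measure_iUnion_fintype_le _ _).trans
          (sum_le_sum fun S _ => measure_biUnion_finset_le _ _)
    _ = ∑ S ∈ univ.powerset, ∑ T ∈ S.powerset with bad #S #T,
          P {z | z.2 = false ∧ h z.1 = true} ^ #T * P {z | z.2 = true ∧ h z.1 = true} ^ (#S - #T)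
            * P {z | h z.1 = false} ^ (#(univ : Finset (Fin n)) - #S) := by
        rw [powerset_univ, card_univ, Fintype.card_fin]
        exact sum_congr rfl fun S _ => sum_congr rfl fun T hT =>
          measure_pi_discoveries_eq_and_falseDiscoveries_eq P h
            (mem_powerset.1 (mem_filter.1 hT).1)
    _ ≤ (P {z | z.2 = false ∧ h z.1 = true} + P {z | z.2 = true ∧ h z.1 = true}
          + P {z | h z.1 = false}) ^ #(univ : Finset (Fin n)) * (ENNReal.ofReal δ * 2 ^ (-c)) :=
        sum_powerset_sum_powerset_filter_le _ bad _ _ _ _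
          (sum_choose_filter_not_edistE_le_pen_le P hh hδ hE)
    _ = ENNReal.ofReal δ * 2 ^ (-c) := by
        rw [← measure_discovery_eq_add P hh, measure_discovery_add_measure_nondiscovery P hh,
          one_pow, one_mul]

end

lemma codelength_nonneg_of_kraft {α : Type*} {H : Set α} {cl : α → ℝ}
    (hKraft : ∑' h : H, (2 : ℝ≥0∞) ^ (-(cl h.1)) ≤ 1) {h : α} (hh : h ∈ H) : 0 ≤ cl h :=
  not_lt.1 fun hneg => (ENNReal.one_lt_rpow one_lt_two (neg_pos.2 hneg)).not_ge
    ((ENNReal.le_tsum (⟨h, hh⟩ : H)).trans hKraft)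

theorem fdr_uniform_deviation_bound_general
    {𝓧 : Type*} [MeasurableSpace 𝓧] (P : Measure (𝓧 × Bool)) [IsProbabilityMeasure P]
    (H : Set (𝓧 → Bool)) (hHcount : H.Countable) (hHmeas : ∀ h ∈ H, Measurable h)
    (cl : (𝓧 → Bool) → ℝ)
    (hKraft : ∑' h : H, (2 : ℝ≥0∞) ^ (-(cl h.1)) ≤ 1)
    (n : ℕ) (δ : ℝ) (hδ0 : 0 < δ) (hδ1 : δ < 1) :
    ENNReal.ofReal (1 - δ) ≤
      (Measure.pi fun _ : Fin n => P)
        {ω | ∀ h ∈ H, edistE (RD P h) (RhatD h ω) ≤ pen (cl h) δ (nD h ω)} := by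
  set μ := Measure.pi fun _ : Fin n => P
  set B := ⋃ h ∈ H, {ω | ¬ edistE (RD P h) (RhatD h ω) ≤ pen (cl h) δ (nD h ω)}
  have hE : ∀ h ∈ H, 0 ≤ cl h * Real.log 2 + Real.log (2 / δ) := fun h hh =>
    add_nonneg (mul_nonneg (codelength_nonneg_of_kraft hKraft hh) (Real.log_nonneg one_le_two))
      (Real.log_nonneg ((one_le_div hδ0).2 (by linarith)))
  have hB : μ B ≤ ENNReal.ofReal δ :=
    calc μ B ≤ ∑' h : H, μ {ω | ¬ edistE (RD P h) (RhatD h ω) ≤ pen (cl h) δ (nD h ω)} :=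
          measure_biUnion_le μ hHcount _
      _ ≤ ∑' h : H, ENNReal.ofReal δ * 2 ^ (-(cl h.1)) := ENNReal.tsum_le_tsum fun h =>
          measure_pi_not_edistE_le_pen_le P (hHmeas h h.2) hδ0 (hE h h.2) n
      _ ≤ ENNReal.ofReal δ := by
          rw [ENNReal.tsum_mul_left]; exact mul_le_of_le_one_right' hKraft
  have hgood : {ω | ∀ h ∈ H, edistE (RD P h) (RhatD h ω) ≤ pen (cl h) δ (nD h ω)} = Bᶜ := by
    ext; simp [B]
  calc ENNReal.ofReal (1 - δ) = 1 - ENNReal.ofReal δ := by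
        rw [ENNReal.ofReal_sub 1 hδ0.le, ENNReal.ofReal_one]
    _ ≤ 1 - μ B := tsub_le_tsub_left hB 1
    _ ≤ μ Bᶜ := by
        rw [tsub_le_iff_left, ← measure_univ (μ := μ)]; exact measure_univ_le_add_compl B
    _ = _ := by rw [hgood]

/-- **Theorem 1, FDR part.** For a countable class `H` of classifiers with codelengths `cl`
satisfying the Kraft inequality, with probability at least `1 - δ` over the draw of an i.i.d.
training sample of size `n` from `P`, every `h ∈ H` satisfies
`|R_D(h) - R̂_D(h)| ≤ φ_D(h, δ)`.  This holds for every `n ≥ 1`, every `0 < δ < 1` and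
every underlying distribution `P`. -/
theorem fdr_uniform_deviation_bound
    {𝓧 : Type*} [MeasurableSpace 𝓧] (P : Measure (𝓧 × Bool)) [IsProbabilityMeasure P]
    (H : Set (𝓧 → Bool)) (hHcount : H.Countable) (hHmeas : ∀ h ∈ H, Measurable h)
    (cl : (𝓧 → Bool) → ℝ)
    (hKraft : ∑' h : H, (2 : ℝ≥0∞) ^ (-(cl h.1)) ≤ 1)
    (n : ℕ) (hn : 1 ≤ n) (δ : ℝ) (hδ0 : 0 < δ) (hδ1 : δ < 1) :
    ENNReal.ofReal (1 - δ) ≤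
      (Measure.pi fun _ : Fin n => P)
        {ω | ∀ h ∈ H, edistE (RD P h) (RhatD h ω) ≤ pen (cl h) δ (nD h ω)} :=
  fdr_uniform_deviation_bound_general P H hHcount hHmeas cl hKraft n δ hδ0 hδ1
end

section
/- With probability at least 1 − δ over the draw of the i.i.d. training sample Z^n, every classifier h in the countable class ℋ satisfies |R_ND(h) − R̂_ND(h)| ≤ φ_ND(h, δ). This holds for every n ≥ 1, every 0 < δ < 1, and every underlying probability distribution P on 𝒳 × {0,1}. -/
open MeasureTheory ENNReal

/-- The false nondiscovery rate `R_ND(h) = P(Y = 1 | h(X) = 0)`, equal to `∞` when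
`P(h(X) = 0) = 0`. -/
noncomputable def RND {𝓧 : Type*} [MeasurableSpace 𝓧] (P : Measure (𝓧 × Bool))
    (h : 𝓧 → Bool) : ℝ≥0∞ :=
  if 0 < P {z : 𝓧 × Bool | h z.1 = false} then
    P {z : 𝓧 × Bool | z.2 = true ∧ h z.1 = false} / P {z : 𝓧 × Bool | h z.1 = false}
  else ⊤

/-- The empirical number of nondiscoveries `n_ND(h, Zⁿ)`. -/
def nND {𝓧 : Type*} {n : ℕ} (h : 𝓧 → Bool) (ω : Fin n → 𝓧 × Bool) : ℕ :=
  (Finset.univ.filter fun i => h (ω i).1 = false).card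

/-- The empirical false nondiscovery rate `R̂_ND(h)`, equal to `∞` when `n_ND(h, Zⁿ) = 0`. -/
noncomputable def RhatND {𝓧 : Type*} {n : ℕ} (h : 𝓧 → Bool) (ω : Fin n → 𝓧 × Bool) : ℝ≥0∞ :=
  if 0 < nND h ω then
    ((Finset.univ.filter fun i => (ω i).2 = true ∧ h (ω i).1 = false).card : ℝ≥0∞)
      / (nND h ω : ℝ≥0∞)
  else ⊤

/-!
Fix a classifier `h` and let `A = {h(X) = 0}`. Given that the set of indices `i` with
`h(Xᵢ) = 0` is a fixed nonempty `S`, the labels `Yᵢ`, `i ∈ S`, are i.i.d. with law `P[Y | A]`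
and mean `R_ND(h)`: the product measure restricted to that cell is `P(A)^|S| P(Aᶜ)^(n-|S|)`
times a product of conditional laws. Hoeffding's inequality therefore bounds the conditional
probability that `|R̂_ND(h) - R_ND(h)|` exceeds `φ_ND(h, δ)` by `2 exp(-2|S| φ²) = δ 2^(-⟦h⟧)`,
and summing over the cells, whose weights add up to `(P(A) + P(Aᶜ))ⁿ = 1`, keeps this bound.
A union bound over `ℋ` and Kraft's inequality finish the proof.
-/

open ProbabilityTheory Finset

lemma measure_abs_sum_sub_integral_ge_le_of_iIndepFun {Ω ι : Type*} [MeasurableSpace Ω]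
    {μ : Measure Ω} [IsProbabilityMeasure μ] {X : ι → Ω → ℝ} {s : Finset ι} {a b ε : ℝ}
    (hindep : iIndepFun X μ) (hmeas : ∀ i, Measurable (X i))
    (hab : ∀ i ∈ s, ∀ ω, X i ω ∈ Set.Icc a b) (hε : 0 ≤ ε) :
    μ {ω | ε ≤ |∑ i ∈ s, (X i ω - μ[X i])|} ≤
      ENNReal.ofReal (2 * Real.exp (-2 * ε ^ 2 / (#s * (b - a) ^ 2))) := by
  set Y : ι → Ω → ℝ := fun i ω ↦ X i ω - μ[X i]
  have hY : iIndepFun Y μ := by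
    have := hindep.comp (fun i (x : ℝ) ↦ x - μ[X i]) fun _ ↦ measurable_id.sub_const _
    exact this
  have hsubG : ∀ i ∈ s, HasSubgaussianMGF (Y i) ((‖b - a‖₊ / 2) ^ 2) μ := fun i hi ↦
    hasSubgaussianMGF_of_mem_Icc (hmeas i).aemeasurable (ae_of_all _ (hab i hi))
  have hexp : -ε ^ 2 / (2 * ((∑ i ∈ s, (‖b - a‖₊ / 2) ^ 2 : NNReal) : ℝ)) =
      -2 * ε ^ 2 / (#s * (b - a) ^ 2) := by
    have hden : 2 * ((∑ i ∈ s, (‖b - a‖₊ / 2) ^ 2 : NNReal) : ℝ) = #s * (b - a) ^ 2 / 2 := by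
      rw [NNReal.coe_sum]
      simp only [NNReal.coe_pow, NNReal.coe_div, coe_nnnorm, Real.norm_eq_abs,
        NNReal.coe_ofNat, div_pow, sq_abs, sum_const, nsmul_eq_mul]
      ring
    rw [hden, div_div_eq_mul_div]
    ring
  have hupper := HasSubgaussianMGF.measure_sum_ge_le_of_iIndepFun hY hsubG hε
  have hlower := HasSubgaussianMGF.measure_sum_ge_le_of_iIndepFun
    (hY.comp (fun _ ↦ Neg.neg) fun _ ↦ measurable_neg) (fun i hi ↦ (hsubG i hi).neg) hε
  simp only [Function.comp_apply, sum_neg_distrib] at hlower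
  rw [hexp] at hupper hlower
  calc μ {ω | ε ≤ |∑ i ∈ s, Y i ω|}
      ≤ μ ({ω | ε ≤ ∑ i ∈ s, Y i ω} ∪ {ω | ε ≤ -∑ i ∈ s, Y i ω}) :=
        measure_mono fun _ hω ↦ le_abs.mp (Set.mem_ofPred.mp hω)
    _ ≤ μ {ω | ε ≤ ∑ i ∈ s, Y i ω} + μ {ω | ε ≤ -∑ i ∈ s, Y i ω} := measure_union_le _ _
    _ ≤ _ := by
        rw [two_mul, ENNReal.ofReal_add (by positivity) (by positivity),
          ← ofReal_measureReal, ← ofReal_measureReal]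
        exact add_le_add (ENNReal.ofReal_le_ofReal hupper) (ENNReal.ofReal_le_ofReal hlower)

lemma MeasureTheory.Measure.restrict_pi_pi_eq_smul_pi_cond {ι : Type*} [Fintype ι]
    {α : ι → Type*} [∀ i, MeasurableSpace (α i)] (μ : ∀ i, Measure (α i))
    [∀ i, IsFiniteMeasure (μ i)] {s : ∀ i, Set (α i)} (hs : ∀ i, MeasurableSet (s i)) :
    (Measure.pi μ).restrict (Set.univ.pi s) =
      (∏ i, μ i (s i)) • Measure.pi fun i ↦ (μ i)[|s i] := by
  rw [Measure.restrict_pi_pi]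
  refine Measure.pi_eq fun t ht ↦ ?_
  rw [Measure.smul_apply, Measure.pi_pi, smul_eq_mul, ← prod_mul_distrib]
  exact prod_congr rfl fun i _ ↦ by
    rw [mul_comm, cond_mul_eq_inter (hs i), Measure.restrict_apply (ht i), Set.inter_comm]

lemma Fintype.prod_ite_mem_eq_pow_mul_pow {ι M : Type*} [Fintype ι] [DecidableEq ι]
    [CommMonoid M] (S : Finset ι) (a b : M) :
    ∏ i, (if i ∈ S then a else b) = a ^ #S * b ^ (Fintype.card ι - #S) := by
  rw [prod_ite, prod_const, prod_const, filter_mem_eq_inter, univ_inter, filter_not,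
    filter_mem_eq_inter, univ_inter, card_sdiff_of_subset (subset_univ _), card_univ]

lemma measure_pi_inter_abs_sum_sub_integral_cond_ge_le {Ω ι : Type*} [MeasurableSpace Ω]
    [Fintype ι] [DecidableEq ι] (P : Measure Ω) [IsProbabilityMeasure P] {A : Set Ω}
    (hA : MeasurableSet A) (S : Finset ι) {f : Ω → ℝ} (hf : Measurable f) {a b ε : ℝ}
    (hab : ∀ z, f z ∈ Set.Icc a b) (hε : 0 ≤ ε) :
    Measure.pi (fun _ : ι ↦ P) (Set.univ.pi (fun i ↦ if i ∈ S then A else Aᶜ) ∩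
        {ω | ε ≤ |∑ i ∈ S, (f (ω i) - ∫ z, f z ∂P[|A])|}) ≤
      P A ^ #S * P Aᶜ ^ (Fintype.card ι - #S) *
        ENNReal.ofReal (2 * Real.exp (-2 * ε ^ 2 / (#S * (b - a) ^ 2))) := by
  set C : ι → Set Ω := fun i ↦ if i ∈ S then A else Aᶜ
  have hC : ∀ i, MeasurableSet (C i) := fun i ↦ by
    by_cases hi : i ∈ S <;> simp [C, hi, hA, hA.compl]
  have hD : MeasurableSet {ω : ι → Ω | ε ≤ |∑ i ∈ S, (f (ω i) - ∫ z, f z ∂P[|A])|} :=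
    measurableSet_le measurable_const (by fun_prop)
  have hprod : ∏ i, P (C i) = P A ^ #S * P Aᶜ ^ (Fintype.card ι - #S) := by
    rw [← Fintype.prod_ite_mem_eq_pow_mul_pow]
    exact prod_congr rfl fun i _ ↦ by by_cases hi : i ∈ S <;> simp [C, hi]
  rw [Set.inter_comm, ← Measure.restrict_apply hD, Measure.restrict_pi_pi_eq_smul_pi_cond _ hC,
    Measure.smul_apply, smul_eq_mul, ← hprod]
  rcases eq_or_ne (∏ i, P (C i)) 0 with h0 | h0
  · rw [h0, zero_mul]
    exact bot_le
  have (i : ι) : IsProbabilityMeasure P[|C i] :=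
    cond_isProbabilityMeasure (prod_ne_zero_iff.mp h0 i (mem_univ i))
  have hmean : ∀ i ∈ S, ∫ ω, f (ω i) ∂Measure.pi (fun i ↦ P[|C i]) = ∫ z, f z ∂P[|A] :=
    fun i hi ↦ by rw [integral_comp_eval hf.aestronglyMeasurable]; simp [C, hi]
  have hcenter (ω : ι → Ω) : ∑ i ∈ S, (f (ω i) - ∫ z, f z ∂P[|A]) =
      ∑ i ∈ S, (f (ω i) - ∫ ω, f (ω i) ∂Measure.pi (fun i ↦ P[|C i])) :=
    sum_congr rfl fun i hi ↦ by rw [hmean i hi]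
  simp only [hcenter]
  gcongr
  exact measure_abs_sum_sub_integral_ge_le_of_iIndepFun (iIndepFun_pi fun _ ↦ hf.aemeasurable)
    (fun i ↦ hf.comp (measurable_pi_apply i)) (fun _ _ _ ↦ hab _) hε

lemma edistE_eq_ofReal_abs {x y : ℝ≥0∞} (hx : x ≠ ⊤) (hy : y ≠ ⊤) :
    edistE x y = ENNReal.ofReal |x.toReal - y.toReal| := by
  unfold edistE
  rcases le_total x y with hxy | hyx
  · rw [tsub_eq_zero_of_le hxy, zero_max, abs_sub_comm, ← ENNReal.toReal_sub_of_le hxy hy,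
      abs_of_nonneg toReal_nonneg, ofReal_toReal (sub_ne_top hy)]
  · rw [tsub_eq_zero_of_le hyx, _root_.max_zero, ← ENNReal.toReal_sub_of_le hyx hx,
      abs_of_nonneg toReal_nonneg, ofReal_toReal (sub_ne_top hx)]

lemma mul_lt_abs_sub_of_not_edistE_div_le {x : ℝ≥0∞} (hx : x ≠ ⊤) {k m : ℕ} (hm : 0 < m)
    {t : ℝ} (h : ¬ edistE x (k / m) ≤ ENNReal.ofReal t) : m * t < |k - m * x.toReal| := by
  have hm' : (0 : ℝ) < m := by exact_mod_cast hm
  rw [edistE_eq_ofReal_abs hx (div_ne_top (natCast_ne_top k) (by exact_mod_cast hm.ne')),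
    ENNReal.toReal_div, toReal_natCast, toReal_natCast] at h
  have ht : t < |x.toReal - k / m| := lt_of_not_ge fun h' ↦ h (ofReal_le_ofReal h')
  calc (m : ℝ) * t < m * |x.toReal - k / m| := by gcongr
    _ = |k - m * x.toReal| := by
      rw [← abs_of_pos hm', ← abs_mul, abs_of_pos hm', abs_sub_comm, mul_sub,
        mul_div_cancel₀ _ hm'.ne']

lemma two_mul_exp_neg_log_two_div_eq (c : ℝ) {δ : ℝ} (hδ : 0 < δ) :
    2 * Real.exp (-(c * Real.log 2 + Real.log (2 / δ))) = δ * (2 : ℝ) ^ (-c) := by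
  rw [Real.rpow_def_of_pos two_pos, neg_add, Real.exp_add, Real.exp_neg (Real.log _),
    Real.exp_log (by positivity), mul_neg, mul_comm (Real.log 2)]
  field_simp

lemma nonneg_of_two_rpow_neg_le_one {c : ℝ} (h : (2 : ℝ≥0∞) ^ (-c) ≤ 1) : 0 ≤ c := by
  by_contra! hc
  exact h.not_gt (ENNReal.one_lt_rpow one_lt_two (neg_pos.mpr hc))

section FNDR

variable {𝓧 : Type*} {n : ℕ} {h : 𝓧 → Bool}

def ndCell (h : 𝓧 → Bool) (S : Finset (Fin n)) : Set (Fin n → 𝓧 × Bool) :=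
  Set.univ.pi fun i ↦ if i ∈ S then {z | h z.1 = false} else {z | h z.1 = false}ᶜ

lemma mem_ndCell_filter (ω : Fin n → 𝓧 × Bool) :
    ω ∈ ndCell h (univ.filter fun i ↦ h (ω i).1 = false) :=
  fun i _ ↦ by by_cases hi : h (ω i).1 = false <;> simp [hi]

lemma filter_eq_of_mem_ndCell {S : Finset (Fin n)} {ω : Fin n → 𝓧 × Bool}
    (hω : ω ∈ ndCell h S) : univ.filter (fun i ↦ h (ω i).1 = false) = S := by
  ext i
  have := hω i (Set.mem_univ i)
  by_cases hi : i ∈ S <;> simp_all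

lemma natCast_card_filter_eq_sum_indicator_of_mem_ndCell {S : Finset (Fin n)}
    {ω : Fin n → 𝓧 × Bool} (hω : ω ∈ ndCell h S) :
    (#(univ.filter fun i ↦ (ω i).2 = true ∧ h (ω i).1 = false) : ℝ) =
      ∑ i ∈ S, {z : 𝓧 × Bool | z.2 = true}.indicator 1 (ω i) := by
  rw [filter_and, filter_eq_of_mem_ndCell hω, filter_inter, univ_inter, natCast_card_filter]
  simp only [Set.indicator_apply, Set.mem_ofPred_eq, Pi.one_apply]

variable [MeasurableSpace 𝓧] {P : Measure (𝓧 × Bool)}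

lemma RND_ne_top [IsFiniteMeasure P] (hP : P {z | h z.1 = false} ≠ 0) : RND P h ≠ ⊤ := by
  rw [RND, if_pos (pos_iff_ne_zero.mpr hP)]
  exact div_ne_top (measure_ne_top _ _) hP

lemma integral_indicator_cond_eq_RND (hh : Measurable h) (hP : P {z | h z.1 = false} ≠ 0) :
    ∫ z, {z : 𝓧 × Bool | z.2 = true}.indicator 1 z ∂P[|{z | h z.1 = false}] =
      (RND P h).toReal := by
  have hY : MeasurableSet {z : 𝓧 × Bool | z.2 = true} := measurable_snd (measurableSet_singleton _)
  have hA : MeasurableSet {z : 𝓧 × Bool | h z.1 = false} :=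
    (hh.comp measurable_fst) (measurableSet_singleton _)
  rw [integral_indicator_one hY, measureReal_def, cond_apply hA, RND,
    if_pos (pos_iff_ne_zero.mpr hP), ENNReal.div_eq_inv_mul, Set.inter_comm]
  rfl

lemma le_abs_sum_sub_RND_of_not_edistE_le_pen [IsFiniteMeasure P]
    (hP : P {z | h z.1 = false} ≠ 0) {c δ : ℝ} {S : Finset (Fin n)} (hS : S.Nonempty)
    {ω : Fin n → 𝓧 × Bool} (hω : ω ∈ ndCell h S)
    (hbad : ¬ edistE (RND P h) (RhatND h ω) ≤ pen c δ (nND h ω)) :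
    #S * √((c * Real.log 2 + Real.log (2 / δ)) / (2 * #S)) ≤
      |∑ i ∈ S, ({z : 𝓧 × Bool | z.2 = true}.indicator 1 (ω i) - (RND P h).toReal)| := by
  have hnND : nND h ω = #S := congrArg card (filter_eq_of_mem_ndCell hω)
  have hS' : 0 < #S := card_pos.mpr hS
  rw [RhatND, pen, hnND, if_pos hS', if_pos hS'] at hbad
  rw [sum_sub_distrib, sum_const, nsmul_eq_mul,
    ← natCast_card_filter_eq_sum_indicator_of_mem_ndCell hω]
  exact (mul_lt_abs_sub_of_not_edistE_div_le (RND_ne_top hP) hS' hbad).le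

lemma measure_ndCell_inter_not_edistE_le_pen_le [IsProbabilityMeasure P] (hh : Measurable h)
    {c δ : ℝ} (hc : 0 ≤ c) (hδ0 : 0 < δ) (hδ2 : δ ≤ 2) (S : Finset (Fin n)) :
    Measure.pi (fun _ ↦ P)
        (ndCell h S ∩ {ω | ¬ edistE (RND P h) (RhatND h ω) ≤ pen c δ (nND h ω)}) ≤
      P {z | h z.1 = false} ^ #S * P {z | h z.1 = false}ᶜ ^ (n - #S) *
        (ENNReal.ofReal δ * 2 ^ (-c)) := by
  set A : Set (𝓧 × Bool) := {z | h z.1 = false}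
  have hA : MeasurableSet A := (hh.comp measurable_fst) (measurableSet_singleton _)
  rcases S.eq_empty_or_nonempty with rfl | hS
  · have hempty : ndCell h (∅ : Finset (Fin n)) ∩
        {ω | ¬ edistE (RND P h) (RhatND h ω) ≤ pen c δ (nND h ω)} = ∅ := by
      refine Set.eq_empty_of_forall_notMem fun ω ⟨hω, hbad⟩ ↦ hbad ?_
      rw [nND, filter_eq_of_mem_ndCell hω, card_empty, pen, if_neg (lt_irrefl 0)]
      exact le_top
    rw [hempty, measure_empty]
    exact bot_le
  rcases eq_or_ne (P A) 0 with hP | hP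
  · calc _ ≤ Measure.pi (fun _ ↦ P) (ndCell h S) := measure_mono Set.inter_subset_left
      _ = P A ^ #S * P Aᶜ ^ (n - #S) := by
          rw [ndCell, Measure.pi_pi, prod_congr rfl fun i _ ↦ apply_ite P (i ∈ S) A Aᶜ,
            Fintype.prod_ite_mem_eq_pow_mul_pow, Fintype.card_fin]
      _ = 0 := by rw [hP, zero_pow (card_pos.mpr hS).ne', zero_mul]
      _ ≤ _ := bot_le
  set L := c * Real.log 2 + Real.log (2 / δ)
  have hL : 0 ≤ L := add_nonneg (by positivity) (Real.log_nonneg ((one_le_div hδ0).mpr hδ2))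
  have hS' : (0 : ℝ) < #S := by exact_mod_cast card_pos.mpr hS
  have hY : MeasurableSet {z : 𝓧 × Bool | z.2 = true} := measurable_snd (measurableSet_singleton _)
  have hdev := measure_pi_inter_abs_sum_sub_integral_cond_ge_le P hA S
    (measurable_one.indicator hY) (a := 0) (b := 1) (ε := #S * √(L / (2 * #S)))
    (fun z ↦ by by_cases hz : z.2 = true <;> simp [hz]) (by positivity)
  rw [integral_indicator_cond_eq_RND hh hP, Fintype.card_fin] at hdev
  have hexp : 2 * Real.exp (-2 * (#S * √(L / (2 * #S))) ^ 2 / (#S * (1 - 0) ^ 2)) =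
      δ * (2 : ℝ) ^ (-c) := calc
    _ = 2 * Real.exp (-L) := by
        rw [mul_pow, Real.sq_sqrt (by positivity), sub_zero, one_pow, mul_one]
        field_simp
    _ = δ * (2 : ℝ) ^ (-c) := two_mul_exp_neg_log_two_div_eq c hδ0
  refine (measure_mono ?_).trans (hdev.trans_eq ?_)
  · exact fun ω hω ↦ ⟨hω.1, le_abs_sum_sub_RND_of_not_edistE_le_pen hP hS hω.1 hω.2⟩
  rw [hexp, ENNReal.ofReal_mul hδ0.le, ← ENNReal.ofReal_rpow_of_pos two_pos,
    ENNReal.ofReal_ofNat]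

lemma measure_not_edistE_le_pen_le [IsProbabilityMeasure P] (hh : Measurable h) {c δ : ℝ}
    (hc : 0 ≤ c) (hδ0 : 0 < δ) (hδ2 : δ ≤ 2) :
    Measure.pi (fun _ : Fin n ↦ P) {ω | ¬ edistE (RND P h) (RhatND h ω) ≤ pen c δ (nND h ω)} ≤
      ENNReal.ofReal δ * 2 ^ (-c) := by
  have hA : MeasurableSet {z : 𝓧 × Bool | h z.1 = false} :=
    (hh.comp measurable_fst) (measurableSet_singleton _)
  set bad := {ω : Fin n → 𝓧 × Bool | ¬ edistE (RND P h) (RhatND h ω) ≤ pen c δ (nND h ω)}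
  have hcover : bad ⊆ ⋃ S : Finset (Fin n), ndCell h S ∩ bad := fun ω hω ↦
    Set.mem_iUnion.mpr ⟨_, mem_ndCell_filter ω, hω⟩
  calc _ ≤ ∑ S : Finset (Fin n), Measure.pi (fun _ ↦ P) (ndCell h S ∩ bad) :=
        (measure_mono hcover).trans (measure_iUnion_fintype_le _ _)
    _ ≤ ∑ S : Finset (Fin n), P {z | h z.1 = false} ^ #S * P {z | h z.1 = false}ᶜ ^ (n - #S) *
          (ENNReal.ofReal δ * 2 ^ (-c)) :=
        sum_le_sum fun S _ ↦ measure_ndCell_inter_not_edistE_le_pen_le hh hc hδ0 hδ2 S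
    _ = ENNReal.ofReal δ * 2 ^ (-c) := by
        rw [← sum_mul, Fin.sum_pow_mul_eq_add_pow, measure_add_measure_compl hA, measure_univ,
          one_pow, one_mul]

end FNDR

theorem fndr_uniform_deviation_bound_general
    {𝓧 : Type*} [MeasurableSpace 𝓧] (P : Measure (𝓧 × Bool)) [IsProbabilityMeasure P]
    (H : Set (𝓧 → Bool)) (hHcount : H.Countable) (hHmeas : ∀ h ∈ H, Measurable h)
    (cl : (𝓧 → Bool) → ℝ)
    (hKraft : ∑' h : H, (2 : ℝ≥0∞) ^ (-(cl h.1)) ≤ 1)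
    (n : ℕ) (δ : ℝ) (hδ0 : 0 < δ) (hδ1 : δ < 1) :
    ENNReal.ofReal (1 - δ) ≤
      (Measure.pi fun _ : Fin n => P)
        {ω | ∀ h ∈ H, edistE (RND P h) (RhatND h ω) ≤ pen (cl h) δ (nND h ω)} := by
  have : Countable H := hHcount.to_subtype
  set bad : H → Set (Fin n → 𝓧 × Bool) :=
    fun h ↦ {ω | ¬ edistE (RND P h) (RhatND h ω) ≤ pen (cl h) δ (nND h ω)}
  have hbad : Measure.pi (fun _ ↦ P) (⋃ h, bad h) ≤ ENNReal.ofReal δ := calc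
    _ ≤ ∑' h : H, ENNReal.ofReal δ * 2 ^ (-cl h) := (measure_iUnion_le bad).trans <|
        ENNReal.tsum_le_tsum fun h ↦ measure_not_edistE_le_pen_le (hHmeas h h.2)
          (nonneg_of_two_rpow_neg_le_one ((ENNReal.le_tsum h).trans hKraft)) hδ0 (by linarith)
    _ ≤ ENNReal.ofReal δ := by
        rw [ENNReal.tsum_mul_left]
        exact mul_le_of_le_one_right' hKraft
  have hgood : (⋃ h, bad h)ᶜ =
      {ω | ∀ h ∈ H, edistE (RND P h) (RhatND h ω) ≤ pen (cl h) δ (nND h ω)} := by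
    ext ω
    simp [bad]
  calc ENNReal.ofReal (1 - δ) = 1 - ENNReal.ofReal δ := by
        rw [ENNReal.ofReal_sub _ hδ0.le, ENNReal.ofReal_one]
    _ ≤ 1 - Measure.pi (fun _ ↦ P) (⋃ h, bad h) := tsub_le_tsub_left hbad 1
    _ ≤ _ := by
        rw [← hgood, tsub_le_iff_left, ← measure_univ (μ := Measure.pi fun _ : Fin n ↦ P)]
        exact measure_univ_le_add_compl _

/-- **Theorem 1, FNDR part.** For a countable class `H` of classifiers with codelengths `cl`
satisfying the Kraft inequality, with probability at least `1 - δ` over the draw of an i.i.d.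
training sample of size `n` from `P`, every `h ∈ H` satisfies
`|R_ND(h) - R̂_ND(h)| ≤ φ_ND(h, δ)`.  This holds for every `n ≥ 1`, every `0 < δ < 1` and
every underlying distribution `P`. -/
theorem fndr_uniform_deviation_bound
    {𝓧 : Type*} [MeasurableSpace 𝓧] (P : Measure (𝓧 × Bool)) [IsProbabilityMeasure P]
    (H : Set (𝓧 → Bool)) (hHcount : H.Countable) (hHmeas : ∀ h ∈ H, Measurable h)
    (cl : (𝓧 → Bool) → ℝ)
    (hKraft : ∑' h : H, (2 : ℝ≥0∞) ^ (-(cl h.1)) ≤ 1)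
    (n : ℕ) (hn : 1 ≤ n) (δ : ℝ) (hδ0 : 0 < δ) (hδ1 : δ < 1) :
    ENNReal.ofReal (1 - δ) ≤
      (Measure.pi fun _ : Fin n => P)
        {ω | ∀ h ∈ H, edistE (RND P h) (RhatND h ω) ≤ pen (cl h) δ (nND h ω)} :=
  fndr_uniform_deviation_bound_general P H hHcount hHmeas cl hKraft n δ hδ0 hδ1
end

section
/- Assume E*_λ := inf over all measurable classifiers of E_λ(h) is finite, and assume the nested family {ℋ_k} has the universal approximation property lim_{k→∞} inf_{h∈ℋ_k} E_λ(h) = E*_λ. Then for every ν > 0 there exist a classifier h′ (belonging to ℋ_{k_m} for some m) and an integer N₁ such that E_λ(h′) ≤ E*_λ + ν and, for all n > N₁, the probability that h′ ∈ Ĥ_n (i.e., that both n_ND(h′, Z^n)/n ≥ p_n and n_D(h′, Z^n)/n ≥ p_n) is at least 1 − 1/n². -/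
open MeasureTheory ENNReal Filter

/-- The performance measure `E_λ(h) := R_ND(h) + λ · R_D(h)`. -/
noncomputable def Elam {𝓧 : Type*} [MeasurableSpace 𝓧] (P : Measure (𝓧 × Bool))
    (lam : ℝ) (h : 𝓧 → Bool) : ℝ≥0∞ :=
  RND P h + ENNReal.ofReal lam * RD P h

/-- The optimal value `E*_λ`, infimum over all measurable classifiers. -/
noncomputable def ElamStar {𝓧 : Type*} [MeasurableSpace 𝓧] (P : Measure (𝓧 × Bool))
    (lam : ℝ) : ℝ≥0∞ :=
  ⨅ h ∈ {h : 𝓧 → Bool | Measurable h}, Elam P lam h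

/-!
Since `E*_λ < ∞`, the approximation property yields `h′ ∈ ℋ_K` with `E_λ(h′) < E*_λ + ν`.
Finiteness of `E_λ(h′)` forces `P(h′(X) = 1) > 0` and `P(h′(X) = 0) > 0`, and nestedness with
`k_n → ∞` puts `h′` in `ℋ_{k_n}` for large `n`. If an event has probability `q > 0`, Markov's
inequality for `2^(-#hits)` bounds the probability of at most `m` hits among `n` draws by
`2^m (1 - q/2)^n`, which is below `1/(2n²)` for `m ≤ n / log n` and `n` large. A union bound
over the two events finishes the proof.
-/

open Finset ProbabilityTheory Topology

section Rates

variable {𝓧 : Type*} [MeasurableSpace 𝓧] {P : Measure (𝓧 × Bool)} {lam : ℝ} {h : 𝓧 → Bool}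

lemma measure_pos_of_RD_ne_top (hRD : RD P h ≠ ⊤) : 0 < P {z | h z.1 = true} := by
  by_contra hP
  exact hRD (if_neg hP)

lemma measure_pos_of_RND_ne_top (hRND : RND P h ≠ ⊤) : 0 < P {z | h z.1 = false} := by
  by_contra hP
  exact hRND (if_neg hP)

lemma RND_ne_top_of_Elam_ne_top (hE : Elam P lam h ≠ ⊤) : RND P h ≠ ⊤ :=
  (ENNReal.add_ne_top.mp hE).1

lemma RD_ne_top_of_Elam_ne_top (hlam : 0 < lam) (hE : Elam P lam h ≠ ⊤) : RD P h ≠ ⊤ :=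
  fun hRD => (ENNReal.add_ne_top.mp hE).2
    (ENNReal.mul_eq_top.mpr (Or.inl ⟨(ENNReal.ofReal_pos.mpr hlam).ne', hRD⟩))

end Rates

lemma one_sub_add_le_measure_inter {Ω : Type*} [MeasurableSpace Ω] {μ : Measure Ω}
    [IsProbabilityMeasure μ] {A B : Set Ω} {a b : ℝ≥0∞} (hA : μ Aᶜ ≤ a) (hB : μ Bᶜ ≤ b) :
    1 - (a + b) ≤ μ (A ∩ B) := by
  rw [tsub_le_iff_right]
  calc (1 : ℝ≥0∞) = μ (A ∩ B ∪ (A ∩ B)ᶜ) := by rw [Set.union_compl_self, measure_univ]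
    _ ≤ μ (A ∩ B) + (μ Aᶜ + μ Bᶜ) := by
      rw [Set.compl_inter]
      exact (measure_union_le _ _).trans (by gcongr; exact measure_union_le _ _)
    _ ≤ μ (A ∩ B) + (a + b) := by gcongr

lemma eventually_pow_mul_two_pow_le {b : ℝ} (hb0 : 0 < b) (hb1 : b < 1) :
    ∀ᶠ n : ℕ in atTop, ∀ m : ℕ, (m : ℝ) ≤ n / Real.log n →
      b ^ n * 2 ^ m ≤ 1 / (2 * (n : ℝ) ^ 2) := by
  have hlog : Tendsto (fun n : ℕ => Real.log n) atTop atTop :=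
    Real.tendsto_log_atTop.comp tendsto_natCast_atTop_atTop
  -- `n` times this is `log (b ^ n * 2 ^ (n / log n) * 2 * n ^ 2)`
  have hψ : Tendsto (fun n : ℕ => Real.log b + Real.log 2 / Real.log n + Real.log 2 / n +
      2 * (Real.log n / n)) atTop (𝓝 (Real.log b)) := by
    have h1 := hlog.inv_tendsto_atTop.const_mul (Real.log 2)
    have h2 := tendsto_const_div_atTop_nhds_zero_nat (Real.log 2)
    have h3 := (Real.isLittleO_log_id_atTop.tendsto_div_nhds_zero.comp
      tendsto_natCast_atTop_atTop).const_mul 2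
    simpa [div_eq_mul_inv] using ((tendsto_const_nhds.add h1).add h2).add h3
  filter_upwards [hψ.eventually_lt_const (Real.log_neg hb0 hb1), eventually_gt_atTop 0]
    with n hψn hn m hm
  have hn : (0 : ℝ) < n := Nat.cast_pos.mpr hn
  have hlog_le : n * Real.log b + m * Real.log 2 ≤ -(Real.log 2 + 2 * Real.log n) := by
    have h1 : (n : ℝ) * (Real.log 2 / Real.log n) = n / Real.log n * Real.log 2 := by ring
    have h2 : (n : ℝ) * (Real.log 2 / n) = Real.log 2 := by field_simp
    have h3 : (n : ℝ) * (2 * (Real.log n / n)) = 2 * Real.log n := by field_simp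
    have hnψ := mul_neg_of_pos_of_neg hn hψn
    rw [mul_add, mul_add, mul_add, h1, h2, h3] at hnψ
    nlinarith [mul_le_mul_of_nonneg_right hm (Real.log_nonneg one_le_two)]
  rw [← Real.log_le_log_iff (by positivity) (by positivity), Real.log_mul (by positivity)
    (by positivity), Real.log_pow, Real.log_pow, one_div, Real.log_inv,
    Real.log_mul (by norm_num) (by positivity), Real.log_pow]
  push_cast
  linarith

lemma prod_ite_eq_inv_two_pow_card {α : Type*} {p : α → Prop} [DecidablePred p] {n : ℕ}
    (ω : Fin n → α) : ∏ i, (if p (ω i) then (2⁻¹ : ℝ) else 1) = 2⁻¹ ^ #{i | p (ω i)} := by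
  rw [prod_ite, prod_const, prod_const, one_pow, mul_one]

section Concentration

variable {α : Type*} [MeasurableSpace α] {μ : Measure α} [IsProbabilityMeasure μ]
  {p : α → Prop} [DecidablePred p]

lemma measure_pi_card_filter_le_le (hp : MeasurableSet {a | p a}) (n m : ℕ) :
    Measure.pi (fun _ : Fin n => μ) {ω | #{i | p (ω i)} ≤ m} ≤
      ENNReal.ofReal ((1 - μ.real {a | p a} / 2) ^ n * 2 ^ m) := by
  set π := Measure.pi fun _ : Fin n => μ
  set f : α → ℝ := fun a => if p a then 2⁻¹ else 1
  have hf : f = {a | p a}.piecewise (fun _ => 2⁻¹) (fun _ => 1) := rfl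
  have hf_int : Integrable f μ := by
    rw [hf]
    exact .piecewise hp (integrable_const _).integrableOn (integrable_const _).integrableOn
  have hf_integral : ∫ a, f a ∂μ = 1 - μ.real {a | p a} / 2 := by
    rw [hf, integral_piecewise hp (integrable_const _).integrableOn
      (integrable_const _).integrableOn, setIntegral_const, setIntegral_const,
      probReal_compl_eq_one_sub hp, smul_eq_mul, smul_eq_mul]
    ring
  have hF_int : Integrable (fun ω : Fin n → α => ∏ i, f (ω i)) π :=
    Integrable.fintype_prod (f := fun _ => f) fun _ => hf_int
  have hF_nonneg : 0 ≤ᵐ[π] fun ω => ∏ i, f (ω i) :=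
    Eventually.of_forall fun ω => by
      simp only [Pi.zero_apply, f, prod_ite_eq_inv_two_pow_card]
      positivity
  have hmarkov := mul_meas_ge_le_integral_of_nonneg hF_nonneg hF_int ((2 ^ m)⁻¹)
  rw [integral_fintype_prod_eq_pow, hf_integral, Fintype.card_fin,
    inv_mul_le_iff₀ (by positivity)] at hmarkov
  have hsub : {ω : Fin n → α | #{i | p (ω i)} ≤ m} ⊆ {ω | (2 ^ m)⁻¹ ≤ ∏ i, f (ω i)} := by
    intro ω hω
    simp only [Set.mem_ofPred_eq, f, prod_ite_eq_inv_two_pow_card, ← inv_pow] at hω ⊢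
    exact pow_le_pow_of_le_one (by norm_num) (by norm_num) hω
  calc π {ω | #{i | p (ω i)} ≤ m} ≤ π {ω | (2 ^ m)⁻¹ ≤ ∏ i, f (ω i)} := measure_mono hsub
    _ = ENNReal.ofReal (π.real {ω | (2 ^ m)⁻¹ ≤ ∏ i, f (ω i)}) :=
      (ofReal_measureReal (measure_ne_top _ _)).symm
    _ ≤ ENNReal.ofReal ((1 - μ.real {a | p a} / 2) ^ n * 2 ^ m) := by
      rw [mul_comm] at hmarkov
      exact ENNReal.ofReal_le_ofReal hmarkov

lemma eventually_measure_pi_card_filter_div_lt_le (hp : MeasurableSet {a | p a})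
    (hpos : 0 < μ {a | p a}) :
    ∀ᶠ n : ℕ in atTop, Measure.pi (fun _ : Fin n => μ)
      {ω | (#{i | p (ω i)} : ℝ) / n < 1 / Real.log n} ≤
        ENNReal.ofReal (1 / (2 * (n : ℝ) ^ 2)) := by
  have hq : 0 < μ.real {a | p a} := ENNReal.toReal_pos hpos.ne' (measure_ne_top _ _)
  have hq1 : μ.real {a | p a} ≤ 1 := measureReal_le_one
  filter_upwards [eventually_pow_mul_two_pow_le (b := 1 - μ.real {a | p a} / 2)
    (by linarith) (by linarith), eventually_gt_atTop 1] with n hn hn1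
  have hn0 : (0 : ℝ) < n := by positivity
  have hlogn : 0 < Real.log n := Real.log_pos (by exact_mod_cast hn1)
  set m := ⌊(n : ℝ) / Real.log n⌋₊
  have hsub : {ω : Fin n → α | (#{i | p (ω i)} : ℝ) / n < 1 / Real.log n} ⊆
      {ω | #{i | p (ω i)} ≤ m} := by
    intro ω hω
    rw [Set.mem_ofPred_eq, div_lt_div_iff₀ hn0 hlogn, one_mul, ← lt_div_iff₀ hlogn] at hω
    exact Nat.le_floor hω.le
  calc _ ≤ _ := measure_mono hsub
    _ ≤ _ := measure_pi_card_filter_le_le hp n m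
    _ ≤ _ := ENNReal.ofReal_le_ofReal (hn m (Nat.floor_le (by positivity)))

end Concentration

/-- **Lemma 1.** Assume `E*_λ < ∞` and that the nested family `{ℋ_k}` of finite classifier
classes has the universal approximation property `inf_{h ∈ ℋ_k} E_λ(h) → E*_λ`.  Then for
every `ν > 0` there exist a classifier `h′` (in `ℋ_m` for some `m`) and `N₁` such that
`E_λ(h′) ≤ E*_λ + ν` and, for all `n > N₁`, the probability that `h′ ∈ Ĥ_n` — i.e. that
`h′ ∈ ℋ_{k_n}` and both `n_ND(h′, Zⁿ)/n ≥ p_n` and `n_D(h′, Zⁿ)/n ≥ p_n`, where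
`p_n = 1/log n` — is at least `1 - 1/n²`. -/
theorem approximating_classifier_eventually_admissible
    {𝓧 : Type*} [MeasurableSpace 𝓧] (P : Measure (𝓧 × Bool)) [IsProbabilityMeasure P]
    (lam : ℝ) (hlam : 0 < lam)
    (ℋ : ℕ → Finset (𝓧 → Bool)) (hmeas : ∀ m, ∀ h ∈ ℋ m, Measurable h)
    (hnested : ∀ m, ℋ m ⊆ ℋ (m + 1))
    (k : ℕ → ℕ) (hk : Tendsto k atTop atTop)
    (happrox : Tendsto (fun K => ⨅ h ∈ ℋ K, Elam P lam h) atTop (nhds (ElamStar P lam)))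
    (hfin : ElamStar P lam < ⊤)
    (ν : ℝ) (hν : 0 < ν) :
    ∃ (h' : 𝓧 → Bool) (N₁ : ℕ), (∃ m, h' ∈ ℋ m) ∧
      Elam P lam h' ≤ ElamStar P lam + ENNReal.ofReal ν ∧
      ∀ n, N₁ < n →
        ENNReal.ofReal (1 - 1 / (n : ℝ) ^ 2) ≤
          (Measure.pi fun _ : Fin n => P)
            {ω | h' ∈ ℋ (k n) ∧ (1 / Real.log n ≤ (nND h' ω : ℝ) / n) ∧
              (1 / Real.log n ≤ (nD h' ω : ℝ) / n)} := by
  obtain ⟨K, h', hh'K, hE⟩ :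
      ∃ K, ∃ h' ∈ ℋ K, Elam P lam h' < ElamStar P lam + ENNReal.ofReal ν := by
    have hlt := ENNReal.lt_add_right hfin.ne (ENNReal.ofReal_pos.mpr hν).ne'
    simpa only [iInf_lt_iff, exists_prop] using (happrox.eventually_lt_const hlt).exists
  have hE_ne_top : Elam P lam h' ≠ ⊤ := (hE.trans_le le_top).ne
  have hh'_meas : Measurable fun z : 𝓧 × Bool => h' z.1 :=
    (hmeas K h' hh'K).comp measurable_fst
  have hND := eventually_measure_pi_card_filter_div_lt_le (μ := P) (p := fun z => h' z.1 = false)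
    (hh'_meas (measurableSet_singleton false))
    (measure_pos_of_RND_ne_top (RND_ne_top_of_Elam_ne_top hE_ne_top))
  have hD := eventually_measure_pi_card_filter_div_lt_le (μ := P) (p := fun z => h' z.1 = true)
    (hh'_meas (measurableSet_singleton true))
    (measure_pos_of_RD_ne_top (RD_ne_top_of_Elam_ne_top hlam hE_ne_top))
  have hmem : ∀ᶠ n in atTop, h' ∈ ℋ (k n) :=
    (hk.eventually_ge_atTop K).mono fun n hn => monotone_nat_of_le_succ hnested hn hh'K
  obtain ⟨N, hN⟩ := eventually_atTop.mp ((hND.and hD).and hmem)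
  refine ⟨h', N, ⟨K, hh'K⟩, hE.le, fun n hn => ?_⟩
  obtain ⟨⟨hNDn, hDn⟩, hmemn⟩ := hN n hn.le
  have hn : (0 : ℝ) < n := by exact_mod_cast N.zero_le.trans_lt hn
  calc ENNReal.ofReal (1 - 1 / (n : ℝ) ^ 2)
      = 1 - (ENNReal.ofReal (1 / (2 * (n : ℝ) ^ 2)) +
          ENNReal.ofReal (1 / (2 * (n : ℝ) ^ 2))) := by
        rw [← ENNReal.ofReal_add (by positivity) (by positivity), ← ENNReal.ofReal_one,
          ← ENNReal.ofReal_sub _ (by positivity)]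
        congr 1
        field_simp
        ring
    _ ≤ (Measure.pi fun _ : Fin n => P) ({ω | 1 / Real.log n ≤ (nND h' ω : ℝ) / n} ∩
          {ω | 1 / Real.log n ≤ (nD h' ω : ℝ) / n}) :=
        one_sub_add_le_measure_inter (by simp only [Set.compl_ofPred, not_le]; exact hNDn)
          (by simp only [Set.compl_ofPred, not_le]; exact hDn)
    _ = _ := by simp only [← Set.ofPred_and, hmemn, true_and]
end

section
/- Let ℋ be a class of classifiers, and for i = 0, 1 let R_i : ℋ → extended reals be error functionals with data-based estimates R̂_i and penalties φ_i(h, δ) satisfying, for every 0 < δ < 1, P_{Z^n}( sup_{h∈ℋ} [ |R_i(h) − R̂_i(h)| − φ_i(h, δ) ] > 0 ) ≤ δ. Fix 0 < α < 1, let h* := argmin_{h∈ℋ} R_1(h) subject to R_0(h) ≤ α, and let ĥ := argmin_{h∈ℋ} R̂_1(h) + φ_1(h, δ) subject to R̂_0(h) ≤ α + φ_0(h, δ). Then for any δ > 0 and any n ≥ 1, with probability at least 1 − 2δ over the draw of the training data, both R_1(ĥ) ≤ R_1(h*) + 2 φ_1(h*, δ) and R_0(ĥ) ≤ α + 2 φ_0(ĥ,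 δ). The result holds regardless of the data-generating distribution. -/
/- On the event that both confidence intervals hold uniformly over `H`, `h*` is also feasible for
the empirical problem, so `ĥ` beats it empirically; passing from true to empirical
risks and back costs one penalty each way. The two failure events have probability at most `δ`
each, and a union bound finishes. -/

open MeasureTheory ENNReal

theorem edistE_le_iff {a b c : ℝ≥0∞} : edistE a b ≤ c ↔ a ≤ b + c ∧ b ≤ a + c := by
  rw [edistE, sup_le_iff, tsub_le_iff_left, tsub_le_iff_left]

theorem le_add_two_mul_of_edistE_le_of_add_le {r r' s s' p p' : ℝ≥0∞}
    (h : edistE r s ≤ p) (h' : edistE r' s' ≤ p') (hle : s' + p' ≤ s + p) :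
    r' ≤ r + 2 * p :=
  calc r' ≤ s' + p' := (edistE_le_iff.1 h').1
    _ ≤ s + p := hle
    _ ≤ r + p + p := add_le_add_left (edistE_le_iff.1 h).2 _
    _ = r + 2 * p := by ring

theorem le_add_two_mul_of_edistE_le {r s a p : ℝ≥0∞} (h : edistE r s ≤ p) (hs : s ≤ a + p) :
    r ≤ a + 2 * p :=
  calc r ≤ s + p := (edistE_le_iff.1 h).1
    _ ≤ a + p + p := add_le_add_left hs _
    _ = a + 2 * p := by ring

theorem one_sub_add_le_measure_of_compl_union_subset {Ω : Type*} [MeasurableSpace Ω]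
    (μ : Measure Ω) [IsProbabilityMeasure μ] {A B T : Set Ω} (hT : (A ∪ B)ᶜ ⊆ T) :
    1 - (μ A + μ B) ≤ μ T := by
  rw [tsub_le_iff_right]
  calc (1 : ℝ≥0∞) = μ Set.univ := measure_univ.symm
    _ = μ (T ∪ (A ∪ B)) := by rw [Set.union_comm, ← Set.compl_subset_iff_union.1 hT]
    _ ≤ μ T + μ (A ∪ B) := measure_union_le _ _
    _ ≤ μ T + (μ A + μ B) := add_le_add_right (measure_union_le _ _) _

theorem ofReal_one_sub_two_mul {δ : ℝ} (hδ : 0 ≤ δ) :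
    ENNReal.ofReal (1 - 2 * δ) = 1 - (ENNReal.ofReal δ + ENNReal.ofReal δ) := by
  rw [ENNReal.ofReal_sub _ (by positivity), ENNReal.ofReal_one, two_mul,
    ENNReal.ofReal_add hδ hδ]

theorem constrained_learning_general_general
    {𝓧 : Type*} [MeasurableSpace 𝓧] (P : Measure (𝓧 × Bool)) [IsProbabilityMeasure P]
    (n : ℕ)
    (H : Set (𝓧 → Bool))
    (R0 R1 : (𝓧 → Bool) → ℝ≥0∞)
    (Rhat0 Rhat1 : (𝓧 → Bool) → (Fin n → 𝓧 × Bool) → ℝ≥0∞)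
    (phi0 phi1 : (𝓧 → Bool) → ℝ → (Fin n → 𝓧 × Bool) → ℝ≥0∞)
    (hconf0 : ∀ δ' : ℝ, 0 < δ' → δ' < 1 →
      (Measure.pi fun _ : Fin n => P)
          {ω | ∃ h ∈ H, phi0 h δ' ω < edistE (R0 h) (Rhat0 h ω)} ≤ ENNReal.ofReal δ')
    (hconf1 : ∀ δ' : ℝ, 0 < δ' → δ' < 1 →
      (Measure.pi fun _ : Fin n => P)
          {ω | ∃ h ∈ H, phi1 h δ' ω < edistE (R1 h) (Rhat1 h ω)} ≤ ENNReal.ofReal δ')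
    (α : ℝ)
    (δ : ℝ) (hδ : 0 < δ)
    (hstar : 𝓧 → Bool) (hstar_mem : hstar ∈ H)
    (hstar_feas : R0 hstar ≤ ENNReal.ofReal α)
    (hhat : (Fin n → 𝓧 × Bool) → (𝓧 → Bool))
    (hhat_mem : ∀ ω, hhat ω ∈ H)
    (hhat_feas : ∀ ω, Rhat0 (hhat ω) ω ≤ ENNReal.ofReal α + phi0 (hhat ω) δ ω)
    (hhat_min : ∀ ω, ∀ h ∈ H, Rhat0 h ω ≤ ENNReal.ofReal α + phi0 h δ ω →
      Rhat1 (hhat ω) ω + phi1 (hhat ω) δ ω ≤ Rhat1 h ω + phi1 h δ ω) :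
    ENNReal.ofReal (1 - 2 * δ) ≤
      (Measure.pi fun _ : Fin n => P)
        {ω | R1 (hhat ω) ≤ R1 hstar + 2 * phi1 hstar δ ω ∧
          R0 (hhat ω) ≤ ENNReal.ofReal α + 2 * phi0 (hhat ω) δ ω} := by
  rcases le_or_gt 1 δ with hδ1 | hδ1
  · rw [ENNReal.ofReal_eq_zero.2 (by linarith)]
    exact zero_le
  refine (ofReal_one_sub_two_mul hδ.le).le.trans <|
    (tsub_le_tsub_left (add_le_add (hconf0 δ hδ hδ1) (hconf1 δ hδ hδ1)) 1).trans <|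
    one_sub_add_le_measure_of_compl_union_subset _ fun ω hω => ?_
  simp only [Set.mem_compl_iff, Set.mem_union, Set.mem_ofPred_eq, not_or, not_exists, not_and,
    not_lt] at hω
  obtain ⟨hdev0, hdev1⟩ := hω
  have hstar_feas_hat : Rhat0 hstar ω ≤ ENNReal.ofReal α + phi0 hstar δ ω :=
    (edistE_le_iff.1 (hdev0 hstar hstar_mem)).2.trans (add_le_add_left hstar_feas _)
  exact ⟨le_add_two_mul_of_edistE_le_of_add_le (hdev1 hstar hstar_mem) (hdev1 _ (hhat_mem ω))
      (hhat_min ω hstar hstar_mem hstar_feas_hat),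
    le_add_two_mul_of_edistE_le (hdev0 _ (hhat_mem ω)) (hhat_feas ω)⟩

/-- **Theorem 3 (general constrained learning).** Let `R₀, R₁` be Type I/II error
functionals on a class `H` of classifiers, with data-based estimates `R̂₀, R̂₁` and
penalties `φ₀, φ₁` each forming a uniform two-sided confidence interval at level `δ`
(for every `0 < δ < 1`).  Let `h*` minimize `R₁` over `{h ∈ H : R₀(h) ≤ α}` and let `ĥ`
minimize `R̂₁ + φ₁` over `{h ∈ H : R̂₀(h) ≤ α + φ₀(h, δ)}`.  Then for any `δ > 0` and any
`n ≥ 1`, with probability at least `1 - 2δ` over the training sample, both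
`R₁(ĥ) ≤ R₁(h*) + 2φ₁(h*, δ)` and `R₀(ĥ) ≤ α + 2φ₀(ĥ, δ)`, regardless of the
data-generating distribution. -/
theorem constrained_learning_general
    {𝓧 : Type*} [MeasurableSpace 𝓧] (P : Measure (𝓧 × Bool)) [IsProbabilityMeasure P]
    (n : ℕ) (hn : 1 ≤ n)
    (H : Set (𝓧 → Bool))
    (R0 R1 : (𝓧 → Bool) → ℝ≥0∞)
    (Rhat0 Rhat1 : (𝓧 → Bool) → (Fin n → 𝓧 × Bool) → ℝ≥0∞)
    (phi0 phi1 : (𝓧 → Bool) → ℝ → (Fin n → 𝓧 × Bool) → ℝ≥0∞)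
    (hconf0 : ∀ δ' : ℝ, 0 < δ' → δ' < 1 →
      (Measure.pi fun _ : Fin n => P)
          {ω | ∃ h ∈ H, phi0 h δ' ω < edistE (R0 h) (Rhat0 h ω)} ≤ ENNReal.ofReal δ')
    (hconf1 : ∀ δ' : ℝ, 0 < δ' → δ' < 1 →
      (Measure.pi fun _ : Fin n => P)
          {ω | ∃ h ∈ H, phi1 h δ' ω < edistE (R1 h) (Rhat1 h ω)} ≤ ENNReal.ofReal δ')
    (α : ℝ) (hα0 : 0 < α) (hα1 : α < 1)
    (δ : ℝ) (hδ : 0 < δ)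
    (hstar : 𝓧 → Bool) (hstar_mem : hstar ∈ H)
    (hstar_feas : R0 hstar ≤ ENNReal.ofReal α)
    (hstar_min : ∀ h ∈ H, R0 h ≤ ENNReal.ofReal α → R1 hstar ≤ R1 h)
    (hhat : (Fin n → 𝓧 × Bool) → (𝓧 → Bool))
    (hhat_mem : ∀ ω, hhat ω ∈ H)
    (hhat_feas : ∀ ω, Rhat0 (hhat ω) ω ≤ ENNReal.ofReal α + phi0 (hhat ω) δ ω)
    (hhat_min : ∀ ω, ∀ h ∈ H, Rhat0 h ω ≤ ENNReal.ofReal α + phi0 h δ ω →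
      Rhat1 (hhat ω) ω + phi1 (hhat ω) δ ω ≤ Rhat1 h ω + phi1 h δ ω) :
    ENNReal.ofReal (1 - 2 * δ) ≤
      (Measure.pi fun _ : Fin n => P)
        {ω | R1 (hhat ω) ≤ R1 hstar + 2 * phi1 hstar δ ω ∧
          R0 (hhat ω) ≤ ENNReal.ofReal α + 2 * phi0 (hhat ω) δ ω} :=
  constrained_learning_general_general P n H R0 R1 Rhat0 Rhat1 phi0 phi1 hconf0 hconf1 α δ hδ hstar
    hstar_mem hstar_feas hhat hhat_mem hhat_feas hhat_min
end

section
/- Let ℋ be countable with codelengths satisfying the Kraft inequality, fix 0 < α < 1, let h* := argmin_{h∈ℋ} R_ND(h) subject to R_D(h) ≤ α, and let ĥ := argmin_{h∈ℋ} R̂_ND(h) + φ_ND(h, δ) subject to R̂_D(h) ≤ α + φ_D(h, δ). Then for any δ > 0 and any n ≥ 1, with probability at least 1 − 2δ over the draw of the training data, both R_ND(ĥ) ≤ R_ND(h*) + 2 φ_ND(h*, δ) and R_D(ĥ) ≤ α + 2 φ_D(ĥ, δ). -/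
/-!
Fix a classifier `h` and condition on the set `A` of sample points with `h(X) = 1`. Given `A`,
the points of `A` with label `0` form a binomial sample of size `#A` with parameter `R_D(h)`, so
by Hoeffding's inequality each tail `|R̂_D(h) - R_D(h)| ≥ φ_D(h, δ)` has probability at most
`exp(-2 #A φ_D²) = 2^(-⟦h⟧) δ / 2`; the same holds for the FNDR. The Kraft inequality turns the
union bound over `ℋ` into total failure probability at most `2δ`. Outside that event `h*` is
feasible for the empirical problem, hence
`R_ND(ĥ) ≤ R̂_ND(ĥ) + φ_ND(ĥ) ≤ R̂_ND(h*) + φ_ND(h*) ≤ R_ND(h*) + 2 φ_ND(h*)`, and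
`R_D(ĥ) ≤ R̂_D(ĥ) + φ_D(ĥ) ≤ α + 2 φ_D(ĥ)`.
-/

open MeasureTheory ENNReal

open Real Finset ProbabilityTheory

lemma measure_iUnion_le_of_le_mul {Ω ι : Type*} [MeasurableSpace Ω] [Countable ι]
    {μ : Measure Ω} {s : ι → Set Ω} {w : ι → ℝ≥0∞} {ε : ℝ≥0∞} (hw : ∑' i, w i ≤ 1)
    (hs : ∀ i, μ (s i) ≤ w i * ε) : μ (⋃ i, s i) ≤ ε :=
  calc μ (⋃ i, s i) ≤ ∑' i, μ (s i) := measure_iUnion_le _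
    _ ≤ ∑' i, w i * ε := ENNReal.tsum_le_tsum hs
    _ = (∑' i, w i) * ε := ENNReal.tsum_mul_right
    _ ≤ ε := by simpa using mul_le_mul_left hw ε

lemma one_sub_le_measure_of_measure_compl_le {Ω : Type*} [MeasurableSpace Ω] {μ : Measure Ω}
    [IsProbabilityMeasure μ] {s : Set Ω} {ε : ℝ≥0∞} (h : μ sᶜ ≤ ε) : 1 - ε ≤ μ s := by
  rw [tsub_le_iff_right]
  calc 1 = μ Set.univ := measure_univ.symm
    _ ≤ μ s + μ sᶜ := measure_univ_le_add_compl s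
    _ ≤ μ s + ε := by gcongr

lemma bernoulli_mgf_le_exp {q : ℝ} (hq0 : 0 ≤ q) (hq1 : q ≤ 1) (s : ℝ) :
    1 - q + q * exp s ≤ exp (q * s + s ^ 2 / 8) := by
  let μ : Measure Bool := (1 - q).toNNReal • Measure.dirac false + q.toNNReal • Measure.dirac true
  have hμ : ∀ f : Bool → ℝ, ∫ b, f b ∂μ = (1 - q) * f false + q * f true := by
    intro f
    rw [integral_add_measure Integrable.of_finite Integrable.of_finite,
      integral_smul_nnreal_measure, integral_smul_nnreal_measure]
    simp [NNReal.smul_def, Real.coe_toNNReal _ hq0, Real.coe_toNNReal _ (sub_nonneg.2 hq1)]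
  have : IsProbabilityMeasure μ := ⟨by
    simp [μ, ← ENNReal.coe_add, ← Real.toNNReal_add (sub_nonneg.2 hq1) hq0]⟩
  have hoeffding := (hasSubgaussianMGF_of_mem_Icc (μ := μ) (X := fun b => if b then 1 else 0)
    (a := 0) (b := 1) (measurable_of_finite _).aemeasurable
    (ae_of_all _ fun b => by cases b <;> simp)).mgf_le s
  simp only [mgf, hμ] at hoeffding
  norm_num at hoeffding
  calc 1 - q + q * exp s
      = exp (q * s) * ((1 - q) * exp (-(s * q)) + q * exp (s * (1 - q))) := by
        have h1 : exp (q * s) * exp (-(s * q)) = 1 := by rw [← exp_add]; ring_nf; exact exp_zero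
        have h2 : exp (q * s) * exp (s * (1 - q)) = exp s := by rw [← exp_add]; ring_nf
        linear_combination -(1 - q) * h1 - q * h2
    _ ≤ exp (q * s) * exp (1 / 4 * s ^ 2 / 2) := by gcongr
    _ = exp (q * s + s ^ 2 / 8) := by rw [← exp_add]; ring_nf

lemma binomial_upper_tail_le {ι : Type*} [DecidableEq ι] (A : Finset ι) {q t : ℝ}
    (hq0 : 0 ≤ q) (hq1 : q ≤ 1) (ht : 0 ≤ t) :
    ∑ B ∈ A.powerset with #A * q + #A * t ≤ #B, q ^ #B * (1 - q) ^ (#A - #B)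
      ≤ exp (-(2 * #A * t ^ 2)) := by
  have hq' : 0 ≤ 1 - q := sub_nonneg.2 hq1
  set k := #A
  -- exponential tilting with the Chernoff-optimal parameter `s = 4t`
  set s := 4 * t
  set tilt := exp (-(s * (k * q + k * t)))
  have hterm : ∀ B ∈ {B ∈ A.powerset | k * q + k * t ≤ #B},
      q ^ #B * (1 - q) ^ (k - #B) ≤ tilt * ((q * exp s) ^ #B * (1 - q) ^ (k - #B)) := by
    intro B hB
    have hcard := (mem_filter.1 hB).2
    have hone : 1 ≤ tilt * exp s ^ #B := by
      rw [← exp_nat_mul, ← exp_add]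
      exact one_le_exp (by nlinarith)
    have : 0 ≤ q ^ #B * (1 - q) ^ (k - #B) := by positivity
    calc q ^ #B * (1 - q) ^ (k - #B) ≤ (tilt * exp s ^ #B) * (q ^ #B * (1 - q) ^ (k - #B)) :=
          le_mul_of_one_le_left this hone
      _ = _ := by ring
  calc ∑ B ∈ A.powerset with k * q + k * t ≤ #B, q ^ #B * (1 - q) ^ (k - #B)
      ≤ ∑ B ∈ A.powerset, tilt * ((q * exp s) ^ #B * (1 - q) ^ (k - #B)) :=
        (sum_le_sum hterm).trans (sum_le_sum_of_subset_of_nonneg (filter_subset _ _)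
          fun _ _ _ => by positivity)
    _ = tilt * (q * exp s + (1 - q)) ^ k := by rw [← mul_sum, sum_pow_mul_eq_add_pow]
    _ ≤ tilt * exp (q * s + s ^ 2 / 8) ^ k := by
        gcongr
        exact (add_comm _ _).trans_le (bernoulli_mgf_le_exp hq0 hq1 s)
    _ = exp (-(2 * k * t ^ 2)) := by
        rw [← exp_nat_mul, ← exp_add, show s = 4 * t from rfl]
        ring_nf

lemma two_mul_exp_neg_level (c : ℝ) {δ : ℝ} (hδ : 0 < δ) :
    2 * exp (-(c * Real.log 2 + Real.log (2 / δ))) = 2 ^ (-c) * δ := by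
  rw [rpow_def_of_pos two_pos, neg_add, exp_add, exp_neg (Real.log _), exp_log (by positivity)]
  field_simp

section Patterns

variable {Z : Type*} {n : ℕ}

open Classical in
noncomputable def hits (E : Set Z) (ω : Fin n → Z) : Finset (Fin n) :=
  {i | ω i ∈ E}

lemma mem_hits {E : Set Z} {ω : Fin n → Z} {i : Fin n} : i ∈ hits E ω ↔ ω i ∈ E := by
  simp [hits]

lemma hits_mono {E F : Set Z} (hFE : F ⊆ E) (ω : Fin n → Z) : hits F ω ⊆ hits E ω :=
  fun _ hi => mem_hits.2 (hFE (mem_hits.1 hi))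

lemma hits_sdiff (E F : Set Z) (ω : Fin n → Z) : hits (E \ F) ω = hits E ω \ hits F ω := by
  ext i
  simp [mem_hits]

variable [MeasurableSpace Z] {μ : Measure Z} {E F : Set Z}

noncomputable def empRatio (E F : Set Z) (ω : Fin n → Z) : ℝ≥0∞ :=
  if 0 < #(hits E ω) then (#(hits F ω) : ℝ≥0∞) / #(hits E ω) else ⊤

noncomputable def measureRatio (μ : Measure Z) (E F : Set Z) : ℝ≥0∞ :=
  if 0 < μ E then μ F / μ E else ⊤

def RatioNear (μ : Measure Z) (E F : Set Z) (c δ : ℝ) (ω : Fin n → Z) : Prop :=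
  empRatio E F ω ≤ measureRatio μ E F + pen c δ #(hits E ω) ∧
    measureRatio μ E F ≤ empRatio E F ω + pen c δ #(hits E ω)

lemma ratioNear_of_card_hits_eq_zero {c δ : ℝ} {ω : Fin n → Z} (h : #(hits E ω) = 0) :
    RatioNear μ E F c δ ω := by
  simp [RatioNear, pen, h]

variable [IsProbabilityMeasure μ]

lemma measure_pi_card_hits_pos_eq_zero (hE : MeasurableSet E) (hE0 : μ E = 0) :
    Measure.pi (fun _ : Fin n => μ) {ω | 0 < #(hits E ω)} = 0 := by
  refine measure_mono_null (fun ω hω => ?_) (measure_iUnion_null fun i =>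
    ((measurePreserving_eval _ i).measure_preimage hE.nullMeasurableSet).trans hE0)
  obtain ⟨i, hi⟩ := card_pos.1 hω
  exact Set.mem_iUnion.2 ⟨i, mem_hits.1 hi⟩

lemma measure_pi_hits_eq (hFE : F ⊆ E) {A B : Finset (Fin n)} (hBA : B ⊆ A) :
    Measure.pi (fun _ => μ) {ω | hits E ω = A ∧ hits F ω = B} =
      μ F ^ #B * μ (E \ F) ^ (#A - #B) * μ Eᶜ ^ (n - #A) := by
  classical
  let cell : Fin n → Set Z := fun i => if i ∈ B then F else if i ∈ A then E \ F else Eᶜ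
  have hset : {ω | hits E ω = A ∧ hits F ω = B} = Set.univ.pi cell := by
    ext ω
    simp only [Set.mem_ofPred_eq, Set.mem_pi, Set.mem_univ, true_implies, cell, Finset.ext_iff,
      mem_hits]
    constructor
    · rintro ⟨hA, hB⟩ i
      split_ifs <;> grind
    · intro h
      constructor <;> intro i <;> have := h i <;> split_ifs at this <;> grind
  rw [hset, Measure.pi_pi, ← prod_sdiff (subset_univ A), ← prod_sdiff hBA,
    prod_congr rfl fun i hi => (by grind : μ (cell i) = μ Eᶜ),
    prod_congr rfl fun i hi => (by grind : μ (cell i) = μ (E \ F)),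
    prod_congr rfl fun i hi => (by grind : μ (cell i) = μ F)]
  simp only [prod_const, card_sdiff_of_subset hBA, card_sdiff_of_subset (subset_univ A),
    card_univ, Fintype.card_fin]
  ring

/-- Given the set `A` of sample points in `E`, those in `F` form a binomial subset of `A` with
parameter `μ F / μ E`. -/
lemma measureReal_pi_hits_le (hE : MeasurableSet E) (hF : MeasurableSet F) (hFE : F ⊆ E)
    (S : Finset (Fin n) → Finset (Fin n) → Prop) [DecidableRel S] {ε : ℝ}
    (hS : ∀ A : Finset (Fin n), ∑ B ∈ A.powerset with S A B,
      (μ.real F / μ.real E) ^ #B * (1 - μ.real F / μ.real E) ^ (#A - #B) ≤ ε) :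
    (Measure.pi fun _ => μ).real {ω | S (hits E ω) (hits F ω)} ≤ ε := by
  set a := μ.real E with ha_def
  set q := μ.real F / a
  have hFq : μ.real F = a * q := by
    rcases eq_or_ne a 0 with ha | ha
    · rw [ha, zero_mul]
      exact le_antisymm (ha ▸ measureReal_mono hFE) measureReal_nonneg
    · exact (mul_div_cancel₀ _ ha).symm
  have hEF : μ.real (E \ F) = a * (1 - q) := by
    rw [measureReal_sdiff hFE hF, hFq]
    ring
  have hEc : 0 ≤ 1 - a := by
    rw [← probReal_compl_eq_one_sub hE]
    exact measureReal_nonneg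
  have hatom : ∀ A : Finset (Fin n), ∀ B ∈ A.powerset,
      (Measure.pi fun _ => μ).real {ω | hits E ω = A ∧ hits F ω = B} =
        a ^ #A * (1 - a) ^ (n - #A) * (q ^ #B * (1 - q) ^ (#A - #B)) := by
    intro A B hB
    have hBA := mem_powerset.1 hB
    rw [measureReal_def, measure_pi_hits_eq hFE hBA, toReal_mul, toReal_mul, toReal_pow,
      toReal_pow, toReal_pow, ← measureReal_def, ← measureReal_def, ← measureReal_def,
      hEF, probReal_compl_eq_one_sub hE, ← ha_def, hFq, mul_pow, mul_pow,
      ← pow_mul_pow_sub a (card_le_card hBA)]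
    ring
  have hcover : {ω | S (hits E ω) (hits F ω)} ⊆ ⋃ A ∈ (univ : Finset (Finset (Fin n))),
      ⋃ B ∈ {B ∈ A.powerset | S A B}, {ω | hits E ω = A ∧ hits F ω = B} := by
    intro ω hω
    simp only [Set.mem_iUnion, mem_filter, mem_powerset]
    exact ⟨_, mem_univ _, _, ⟨hits_mono hFE ω, hω⟩, rfl, rfl⟩
  calc (Measure.pi fun _ => μ).real {ω | S (hits E ω) (hits F ω)}
      ≤ ∑ A, ∑ B ∈ A.powerset with S A B,
          (Measure.pi fun _ => μ).real {ω | hits E ω = A ∧ hits F ω = B} :=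
        (measureReal_mono hcover (measure_ne_top _ _)).trans <|
          (measureReal_biUnion_finset_le _ _).trans <|
            sum_le_sum fun A _ => measureReal_biUnion_finset_le _ _
    _ = ∑ A, a ^ #A * (1 - a) ^ (n - #A) *
          ∑ B ∈ A.powerset with S A B, q ^ #B * (1 - q) ^ (#A - #B) := by
        refine sum_congr rfl fun A _ => ?_
        rw [mul_sum]
        exact sum_congr rfl fun B hB => hatom A B (mem_filter.1 hB).1
    _ ≤ ∑ A, a ^ #A * (1 - a) ^ (#(univ : Finset (Fin n)) - #A) * ε := by
        rw [card_univ, Fintype.card_fin]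
        gcongr with A
        exact hS A
    _ = ε := by
        rw [← sum_mul, ← powerset_univ, sum_pow_mul_eq_add_pow]
        simp

lemma measureReal_pi_upper_tail_le (hE : MeasurableSet E) (hF : MeasurableSet F) (hFE : F ⊆ E)
    (L : ℝ) :
    (Measure.pi fun _ : Fin n => μ).real {ω | 0 < #(hits E ω) ∧
      #(hits E ω) * (μ.real F / μ.real E) + #(hits E ω) * √(L / (2 * #(hits E ω)))
        ≤ #(hits F ω)} ≤ exp (-L) := by
  have hq0 : 0 ≤ μ.real F / μ.real E := div_nonneg measureReal_nonneg measureReal_nonneg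
  have hq1 : μ.real F / μ.real E ≤ 1 := div_le_one_of_le₀ (measureReal_mono hFE) measureReal_nonneg
  refine measureReal_pi_hits_le hE hF hFE (fun A B => 0 < #A ∧
    #A * (μ.real F / μ.real E) + #A * √(L / (2 * #A)) ≤ #B) fun A => ?_
  rcases Nat.eq_zero_or_pos #A with hA | hA
  · simp [hA]
    positivity
  · simp only [hA, true_and]
    refine (binomial_upper_tail_le A hq0 hq1 (sqrt_nonneg _)).trans (exp_le_exp.2 ?_)
    have hsq : L / (2 * #A) ≤ √(L / (2 * #A)) ^ 2 := sq_sqrt' ▸ le_max_left _ _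
    rw [div_le_iff₀ (by positivity)] at hsq
    linarith

lemma ratioNear_of_abs_sub_le {c δ : ℝ} {ω : Fin n → Z} (hE0 : μ E ≠ 0) (hm : 0 < #(hits E ω))
    (h : |(#(hits F ω) : ℝ) / #(hits E ω) - μ.real F / μ.real E| ≤
      √((c * Real.log 2 + Real.log (2 / δ)) / (2 * #(hits E ω)))) :
    RatioNear μ E F c δ ω := by
  rw [abs_sub_le_iff] at h
  have hdiv : (#(hits F ω) : ℝ≥0∞) / #(hits E ω) =
      ENNReal.ofReal ((#(hits F ω) : ℝ) / #(hits E ω)) := by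
    rw [ofReal_div_of_pos (Nat.cast_pos.2 hm), ofReal_natCast, ofReal_natCast]
  have hEpos : 0 < μ.real E := toReal_pos hE0 (measure_ne_top _ _)
  have hμdiv : μ F / μ E = ENNReal.ofReal (μ.real F / μ.real E) := by
    rw [ofReal_div_of_pos hEpos, ofReal_measureReal, ofReal_measureReal]
  simp only [RatioNear, empRatio, measureRatio, pen, if_pos hm, if_pos (pos_iff_ne_zero.2 hE0),
    hdiv, hμdiv]
  constructor
  · rw [← ofReal_add (div_nonneg measureReal_nonneg measureReal_nonneg) (sqrt_nonneg _)]
    exact ofReal_le_ofReal (by linarith)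
  · rw [← ofReal_add (by positivity) (sqrt_nonneg _)]
    exact ofReal_le_ofReal (by linarith)

lemma measure_pi_not_ratioNear_le (hE : MeasurableSet E) (hF : MeasurableSet F) (hFE : F ⊆ E)
    (c : ℝ) {δ : ℝ} (hδ : 0 < δ) :
    Measure.pi (fun _ : Fin n => μ) {ω | ¬ RatioNear μ E F c δ ω} ≤
      2 ^ (-c) * ENNReal.ofReal δ := by
  rcases eq_or_ne (μ E) 0 with hE0 | hE0
  · refine (measure_mono_null (fun ω hω => ?_) (measure_pi_card_hits_pos_eq_zero hE hE0)).trans_le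
      zero_le
    exact Nat.pos_of_ne_zero fun h => hω (ratioNear_of_card_hits_eq_zero h)
  set L := c * Real.log 2 + Real.log (2 / δ)
  have ha : μ.real E ≠ 0 := (toReal_pos hE0 (measure_ne_top _ _)).ne'
  have hq : μ.real (E \ F) / μ.real E = 1 - μ.real F / μ.real E := by
    rw [measureReal_sdiff hFE hF]
    field_simp
  -- the lower tail of the `F`-hits is the upper tail of the `E \ F`-hits
  have hcover : {ω : Fin n → Z | ¬ RatioNear μ E F c δ ω} ⊆
      {ω | 0 < #(hits E ω) ∧ #(hits E ω) * (μ.real F / μ.real E) +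
        #(hits E ω) * √(L / (2 * #(hits E ω))) ≤ #(hits F ω)} ∪
      {ω | 0 < #(hits E ω) ∧ #(hits E ω) * (μ.real (E \ F) / μ.real E) +
        #(hits E ω) * √(L / (2 * #(hits E ω))) ≤ #(hits (E \ F) ω)} := by
    intro ω hω
    have hm : 0 < #(hits E ω) :=
      Nat.pos_of_ne_zero fun h => hω (ratioNear_of_card_hits_eq_zero h)
    have hm' : (0 : ℝ) < #(hits E ω) := Nat.cast_pos.2 hm
    by_contra hcon
    simp only [Set.mem_union, Set.mem_ofPred_eq, hm, true_and, not_or, not_le, hq,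
      hits_sdiff, card_sdiff_of_subset (hits_mono hFE ω),
      Nat.cast_sub (card_le_card (hits_mono hFE ω))] at hcon
    refine hω (ratioNear_of_abs_sub_le hE0 hm (abs_sub_le_iff.2 ⟨?_, ?_⟩))
    · rw [div_sub' hm'.ne', div_le_iff₀ hm']
      linarith
    · rw [sub_div' hm'.ne', div_le_iff₀ hm']
      linarith
  calc Measure.pi (fun _ : Fin n => μ) {ω | ¬ RatioNear μ E F c δ ω}
      ≤ _ := (measure_mono hcover).trans (measure_union_le _ _)
    _ ≤ ENNReal.ofReal (exp (-L)) + ENNReal.ofReal (exp (-L)) := by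
        gcongr <;> rw [← ofReal_measureReal] <;> apply ofReal_le_ofReal
        · exact measureReal_pi_upper_tail_le hE hF hFE L
        · exact measureReal_pi_upper_tail_le hE (hE.diff hF) Set.sdiff_subset L
    _ = 2 ^ (-c) * ENNReal.ofReal δ := by
        rw [← ofReal_add (exp_pos _).le (exp_pos _).le, ← two_mul, two_mul_exp_neg_level c hδ,
          ofReal_mul (by positivity), ← ofReal_rpow_of_pos two_pos, ofReal_ofNat]

end Patterns

section Classifiers

variable {𝓧 : Type*} {n : ℕ}

lemma nD_eq_card_hits (h : 𝓧 → Bool) (ω : Fin n → 𝓧 × Bool) :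
    nD h ω = #(hits {z : 𝓧 × Bool | h z.1 = true} ω) := by
  simp [nD, hits]

lemma nND_eq_card_hits (h : 𝓧 → Bool) (ω : Fin n → 𝓧 × Bool) :
    nND h ω = #(hits {z : 𝓧 × Bool | h z.1 = false} ω) := by
  simp [nND, hits]

lemma RhatD_eq_empRatio (h : 𝓧 → Bool) (ω : Fin n → 𝓧 × Bool) :
    RhatD h ω = empRatio {z | h z.1 = true} {z | z.2 = false ∧ h z.1 = true} ω := by
  simp [RhatD, empRatio, nD_eq_card_hits, hits]

lemma RhatND_eq_empRatio (h : 𝓧 → Bool) (ω : Fin n → 𝓧 × Bool) :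
    RhatND h ω = empRatio {z | h z.1 = false} {z | z.2 = true ∧ h z.1 = false} ω := by
  simp [RhatND, empRatio, nND_eq_card_hits, hits]

variable [MeasurableSpace 𝓧]

def RatesNear (P : Measure (𝓧 × Bool)) (c δ : ℝ) (h : 𝓧 → Bool) (ω : Fin n → 𝓧 × Bool) :
    Prop :=
  (RhatD h ω ≤ RD P h + pen c δ (nD h ω) ∧ RD P h ≤ RhatD h ω + pen c δ (nD h ω)) ∧
    (RhatND h ω ≤ RND P h + pen c δ (nND h ω) ∧ RND P h ≤ RhatND h ω + pen c δ (nND h ω))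

lemma ratesNear_iff {P : Measure (𝓧 × Bool)} {c δ : ℝ} {h : 𝓧 → Bool} {ω : Fin n → 𝓧 × Bool} :
    RatesNear P c δ h ω ↔
      RatioNear P {z | h z.1 = true} {z | z.2 = false ∧ h z.1 = true} c δ ω ∧
        RatioNear P {z | h z.1 = false} {z | z.2 = true ∧ h z.1 = false} c δ ω := by
  rw [RatesNear, RhatD_eq_empRatio, RhatND_eq_empRatio, nD_eq_card_hits, nND_eq_card_hits]
  rfl

lemma measure_pi_not_ratesNear_le (P : Measure (𝓧 × Bool)) [IsProbabilityMeasure P]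
    {h : 𝓧 → Bool} (hh : Measurable h) (c : ℝ) {δ : ℝ} (hδ : 0 < δ) :
    Measure.pi (fun _ : Fin n => P) {ω | ¬ RatesNear P c δ h ω} ≤
      2 ^ (-c) * ENNReal.ofReal (2 * δ) := by
  have hlevel : ∀ b, MeasurableSet {z : 𝓧 × Bool | h z.1 = b} := fun b =>
    (hh.comp measurable_fst) (measurableSet_singleton b)
  have hlabel : ∀ b, MeasurableSet {z : 𝓧 × Bool | z.2 = b} := fun b =>
    measurable_snd (measurableSet_singleton b)
  calc Measure.pi (fun _ : Fin n => P) {ω | ¬ RatesNear P c δ h ω}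
      ≤ Measure.pi (fun _ : Fin n => P)
            {ω | ¬ RatioNear P {z | h z.1 = true} {z | z.2 = false ∧ h z.1 = true} c δ ω} +
          Measure.pi (fun _ : Fin n => P)
            {ω | ¬ RatioNear P {z | h z.1 = false} {z | z.2 = true ∧ h z.1 = false} c δ ω} := by
        refine (measure_mono fun ω hω => ?_).trans (measure_union_le _ _)
        simp only [Set.mem_ofPred_eq, ratesNear_iff, not_and_or] at hω
        exact hω
    _ ≤ 2 ^ (-c) * ENNReal.ofReal δ + 2 ^ (-c) * ENNReal.ofReal δ := by
        gcongr
        · exact measure_pi_not_ratioNear_le (hlevel true) ((hlabel false).inter (hlevel true))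
            (fun _ hz => hz.2) c hδ
        · exact measure_pi_not_ratioNear_le (hlevel false) ((hlabel true).inter (hlevel false))
            (fun _ hz => hz.2) c hδ
    _ = 2 ^ (-c) * ENNReal.ofReal (2 * δ) := by
        rw [ENNReal.ofReal_mul zero_le_two, ofReal_ofNat]
        ring

lemma fdr_bounds_of_ratesNear {P : Measure (𝓧 × Bool)} {c₀ c₁ δ : ℝ} {h₀ h₁ : 𝓧 → Bool}
    {ω : Fin n → 𝓧 × Bool} {α : ℝ≥0∞}
    (near₀ : RatesNear P c₀ δ h₀ ω) (near₁ : RatesNear P c₁ δ h₁ ω)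
    (feas₀ : RD P h₀ ≤ α) (feas₁ : RhatD h₁ ω ≤ α + pen c₁ δ (nD h₁ ω))
    (min₁ : RhatD h₀ ω ≤ α + pen c₀ δ (nD h₀ ω) →
      RhatND h₁ ω + pen c₁ δ (nND h₁ ω) ≤ RhatND h₀ ω + pen c₀ δ (nND h₀ ω)) :
    RND P h₁ ≤ RND P h₀ + 2 * pen c₀ δ (nND h₀ ω) ∧ RD P h₁ ≤ α + 2 * pen c₁ δ (nD h₁ ω) := by
  obtain ⟨⟨hD₀, -⟩, hND₀, -⟩ := near₀
  obtain ⟨⟨-, hD₁⟩, -, hND₁⟩ := near₁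
  constructor
  · calc RND P h₁ ≤ RhatND h₁ ω + pen c₁ δ (nND h₁ ω) := hND₁
      _ ≤ RhatND h₀ ω + pen c₀ δ (nND h₀ ω) := min₁ (hD₀.trans (by gcongr))
      _ ≤ RND P h₀ + pen c₀ δ (nND h₀ ω) + pen c₀ δ (nND h₀ ω) := by gcongr
      _ = RND P h₀ + 2 * pen c₀ δ (nND h₀ ω) := by rw [add_assoc, two_mul]
  · calc RD P h₁ ≤ RhatD h₁ ω + pen c₁ δ (nD h₁ ω) := hD₁
      _ ≤ α + pen c₁ δ (nD h₁ ω) + pen c₁ δ (nD h₁ ω) := by gcongr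
      _ = α + 2 * pen c₁ δ (nD h₁ ω) := by rw [add_assoc, two_mul]

end Classifiers

theorem fdr_constrained_learning_general
    {𝓧 : Type*} [MeasurableSpace 𝓧] (P : Measure (𝓧 × Bool)) [IsProbabilityMeasure P]
    (H : Set (𝓧 → Bool)) (hHcount : H.Countable) (hHmeas : ∀ h ∈ H, Measurable h)
    (cl : (𝓧 → Bool) → ℝ)
    (hKraft : ∑' h : H, (2 : ℝ≥0∞) ^ (-(cl h.1)) ≤ 1)
    (n : ℕ)
    (α : ℝ)
    (δ : ℝ) (hδ : 0 < δ)
    (hstar : 𝓧 → Bool) (hstar_mem : hstar ∈ H)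
    (hstar_feas : RD P hstar ≤ ENNReal.ofReal α)
    (hhat : (Fin n → 𝓧 × Bool) → (𝓧 → Bool))
    (hhat_mem : ∀ ω, hhat ω ∈ H)
    (hhat_feas : ∀ ω, RhatD (hhat ω) ω ≤
      ENNReal.ofReal α + pen (cl (hhat ω)) δ (nD (hhat ω) ω))
    (hhat_min : ∀ ω, ∀ h ∈ H, RhatD h ω ≤ ENNReal.ofReal α + pen (cl h) δ (nD h ω) →
      RhatND (hhat ω) ω + pen (cl (hhat ω)) δ (nND (hhat ω) ω) ≤
        RhatND h ω + pen (cl h) δ (nND h ω)) :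
    ENNReal.ofReal (1 - 2 * δ) ≤
      (Measure.pi fun _ : Fin n => P)
        {ω | RND P (hhat ω) ≤ RND P hstar + 2 * pen (cl hstar) δ (nND hstar ω) ∧
          RD P (hhat ω) ≤ ENNReal.ofReal α + 2 * pen (cl (hhat ω)) δ (nD (hhat ω) ω)} := by
  have := hHcount.to_subtype
  have hbad : Measure.pi (fun _ : Fin n => P) (⋃ h : H, {ω | ¬ RatesNear P (cl h) δ h ω}) ≤
      ENNReal.ofReal (2 * δ) :=
    measure_iUnion_le_of_le_mul hKraft fun h => measure_pi_not_ratesNear_le P (hHmeas h h.2) _ hδ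
  rw [ENNReal.ofReal_sub _ (by positivity), ENNReal.ofReal_one]
  refine one_sub_le_measure_of_measure_compl_le ((measure_mono fun ω hω => ?_).trans hbad)
  by_contra hgood
  simp only [Set.mem_iUnion, Set.mem_ofPred_eq, not_exists, not_not] at hgood
  exact hω (fdr_bounds_of_ratesNear (hgood ⟨hstar, hstar_mem⟩) (hgood ⟨hhat ω, hhat_mem ω⟩)
    hstar_feas (hhat_feas ω) (hhat_min ω hstar hstar_mem))

/-- **Corollary 2.** Let `H` be countable with codelengths satisfying the Kraft
inequality, let `h*` minimize `R_ND` over `{h ∈ H : R_D(h) ≤ α}` and let `ĥ` minimize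
`R̂_ND + φ_ND` over `{h ∈ H : R̂_D(h) ≤ α + φ_D(h, δ)}`.  Then for any `δ > 0` and any
`n ≥ 1`, with probability at least `1 - 2δ` over the training sample, both
`R_ND(ĥ) ≤ R_ND(h*) + 2φ_ND(h*, δ)` and `R_D(ĥ) ≤ α + 2φ_D(ĥ, δ)`. -/
theorem fdr_constrained_learning
    {𝓧 : Type*} [MeasurableSpace 𝓧] (P : Measure (𝓧 × Bool)) [IsProbabilityMeasure P]
    (H : Set (𝓧 → Bool)) (hHcount : H.Countable) (hHmeas : ∀ h ∈ H, Measurable h)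
    (cl : (𝓧 → Bool) → ℝ)
    (hKraft : ∑' h : H, (2 : ℝ≥0∞) ^ (-(cl h.1)) ≤ 1)
    (n : ℕ) (hn : 1 ≤ n)
    (α : ℝ) (hα0 : 0 < α) (hα1 : α < 1)
    (δ : ℝ) (hδ : 0 < δ)
    (hstar : 𝓧 → Bool) (hstar_mem : hstar ∈ H)
    (hstar_feas : RD P hstar ≤ ENNReal.ofReal α)
    (hstar_min : ∀ h ∈ H, RD P h ≤ ENNReal.ofReal α → RND P hstar ≤ RND P h)
    (hhat : (Fin n → 𝓧 × Bool) → (𝓧 → Bool))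
    (hhat_mem : ∀ ω, hhat ω ∈ H)
    (hhat_feas : ∀ ω, RhatD (hhat ω) ω ≤
      ENNReal.ofReal α + pen (cl (hhat ω)) δ (nD (hhat ω) ω))
    (hhat_min : ∀ ω, ∀ h ∈ H, RhatD h ω ≤ ENNReal.ofReal α + pen (cl h) δ (nD h ω) →
      RhatND (hhat ω) ω + pen (cl (hhat ω)) δ (nND (hhat ω) ω) ≤
        RhatND h ω + pen (cl h) δ (nND h ω)) :
    ENNReal.ofReal (1 - 2 * δ) ≤
      (Measure.pi fun _ : Fin n => P)
        {ω | RND P (hhat ω) ≤ RND P hstar + 2 * pen (cl hstar) δ (nND hstar ω) ∧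
          RD P (hhat ω) ≤ ENNReal.ofReal α + 2 * pen (cl (hhat ω)) δ (nD (hhat ω) ω)} :=
  fdr_constrained_learning_general P H hHcount hHmeas cl hKraft n α δ hδ hstar hstar_mem hstar_feas
    hhat hhat_mem hhat_feas hhat_min
end
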